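/- arXiv:2202.06898 — 4 statements merged into one kernel-verified Lean document; each statement's English description precedes it below -/
import Mathlib

section
/- For every finite simple bipartite graph G=(V,E), every positive integer vertex capacity function b and all positive edge weights w, the core of the b-assignment game defined on (G,b,w) is non-empty. -/
open scoped Classical
open Finset

namespace MatchingGames

variable {V : Type*}

/-- `M` is a matching of the graph `G`: a set of edges of `G` that are pairwise
vertex-disjoint. -/
def IsMatching (G : SimpleGraph V) (M : Finset (Sym2 V)) : Prop :=
  (∀ e ∈ M, e ∈ G.edgeSet) ∧
    ∀ e ∈ M, ∀ f ∈ M, e ≠ f → ∀ v : V, v ∈ e → v ∉ f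

/-- every endpoint of every edge of `M` belongs to the coalition `S`, i.e. `M` is a
set of edges of the induced subgraph `G[S]`. -/
def EdgesIn (S : Finset V) (M : Finset (Sym2 V)) : Prop :=
  ∀ e ∈ M, ∀ v : V, v ∈ e → v ∈ S

/-- the weight `w(M)` of a set of edges `M`. -/
noncomputable def mWeight (w : Sym2 V → ℝ) (M : Finset (Sym2 V)) : ℝ :=
  ∑ e ∈ M, w e

/-- the value `v(S)` of a coalition `S` in the matching game on `(G,w)`:
the maximum weight of a matching of the induced subgraph `G[S]`. -/
noncomputable def matchVal (G : SimpleGraph V) (w : Sym2 V → ℝ) (S : Finset V) : ℝ :=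
  sSup {t | ∃ M : Finset (Sym2 V), IsMatching G M ∧ EdgesIn S M ∧ t = mWeight w M}

/-- `x` is a core allocation of the cooperative game with value function `v`:
`x(N) = v(N)` and `x(S) ≥ v(S)` for every coalition `S`. -/
def InCore [Fintype V] (v : Finset V → ℝ) (x : V → ℝ) : Prop :=
  (∑ i, x i) = v Finset.univ ∧ ∀ S : Finset V, v S ≤ ∑ i ∈ S, x i

/-- `M` is a `b`-matching of `G`: a set of edges of `G` such that every vertex `i` is
incident to at most `b i` edges of `M`. -/
def IsBMatching [DecidableEq V] (G : SimpleGraph V) (b : V → ℕ)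
    (M : Finset (Sym2 V)) : Prop :=
  (∀ e ∈ M, e ∈ G.edgeSet) ∧ ∀ i : V, (M.filter (fun e => i ∈ e)).card ≤ b i

/-- the value `v(S)` of a coalition `S` in the `b`-matching game on `(G,b,w)`:
the maximum weight of a `b`-matching of the induced subgraph `G[S]`. -/
noncomputable def bVal [DecidableEq V] (G : SimpleGraph V) (b : V → ℕ)
    (w : Sym2 V → ℝ) (S : Finset V) : ℝ :=
  sSup {t | ∃ M : Finset (Sym2 V), IsBMatching G b M ∧ EdgesIn S M ∧ t = mWeight w M}

/-- `(M,p)` is a solution for the instance `(G,b,w)`: `M` is a `b`-matching of `G`,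
matched pairs split the weight of their edge into two nonnegative pay-offs, and all
other pay-offs are zero. -/
def IsBSolution [DecidableEq V] (G : SimpleGraph V) (b : V → ℕ) (w : Sym2 V → ℝ)
    (M : Finset (Sym2 V)) (p : V → V → ℝ) : Prop :=
  IsBMatching G b M ∧
    (∀ i j : V, s(i, j) ∈ M → 0 ≤ p i j ∧ 0 ≤ p j i ∧ p i j + p j i = w s(i, j)) ∧
    ∀ i j : V, s(i, j) ∉ M → p i j = 0

/-- the total pay-off vector `p^t`. -/
noncomputable def totalPayoff [Fintype V] (p : V → V → ℝ) (i : V) : ℝ := ∑ j, p i j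

/-- the utility `u_p(i)`: the `b i`-th largest pay-off `p i j` over the edges `ij` of
`G` (taken as `0` if `i` has fewer than `b i` incident edges; note that in Lean
`sSup ∅ = 0` for real numbers). -/
noncomputable def utility [Fintype V] (G : SimpleGraph V) (b : V → ℕ)
    (p : V → V → ℝ) (i : V) : ℝ :=
  sSup {t : ℝ | b i ≤ (Finset.univ.filter (fun j : V => G.Adj i j ∧ t ≤ p i j)).card}

/-- a solution `(M,p)` for `(G,b,w)` is stable if no pair `{i,j}` with `ij ∈ E \ M`
satisfies `u_p(i) + u_p(j) < w(ij)`. -/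
def IsBStable [Fintype V] [DecidableEq V] (G : SimpleGraph V) (b : V → ℕ)
    (w : Sym2 V → ℝ) (M : Finset (Sym2 V)) (p : V → V → ℝ) : Prop :=
  IsBSolution G b w M p ∧
    ∀ i j : V, G.Adj i j → s(i, j) ∉ M →
      w s(i, j) ≤ utility G b p i + utility G b p j

set_option linter.unusedSectionVars false
set_option linter.unusedVariables false

section Aux

variable [Fintype V] [DecidableEq V] (G : SimpleGraph V) (b : V → ℕ) (w : Sym2 V → ℝ)

lemma bValSet_finite (S : Finset V) :
    {t | ∃ M : Finset (Sym2 V), IsBMatching G b M ∧ EdgesIn S M ∧ t = mWeight w M}.Finite := by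
  apply (Set.finite_range (mWeight w)).subset
  rintro t ⟨M, -, -, rfl⟩
  exact ⟨M, rfl⟩

lemma bValSet_nonempty (S : Finset V) :
    {t | ∃ M : Finset (Sym2 V), IsBMatching G b M ∧ EdgesIn S M ∧ t = mWeight w M}.Nonempty := by
  refine ⟨0, ∅, ⟨?_, ?_⟩, ?_, ?_⟩ <;> simp [mWeight, EdgesIn]

lemma le_bVal {S : Finset V} {M : Finset (Sym2 V)} (h1 : IsBMatching G b M)
    (h2 : EdgesIn S M) : mWeight w M ≤ bVal G b w S :=
  le_csSup (bValSet_finite G b w S).bddAbove ⟨M, h1, h2, rfl⟩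

lemma bVal_le {S : Finset V} {c : ℝ}
    (h : ∀ M : Finset (Sym2 V), IsBMatching G b M → EdgesIn S M → mWeight w M ≤ c) :
    bVal G b w S ≤ c := by
  refine csSup_le (bValSet_nonempty G b w S) ?_
  rintro t ⟨M, h1, h2, rfl⟩
  exact h M h1 h2

/-- one fixed endpoint of an edge. -/
noncomputable def pick (e : Sym2 V) : V := e.out.1

lemma pick_mem (e : Sym2 V) : pick e ∈ e := Sym2.out_fst_mem e

lemma edge_rep {e : Sym2 V} (he : e ∈ G.edgeFinset) :
    ∃ a c : V, a ≠ c ∧ e = s(a, c) ∧ G.Adj a c := by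
  induction e with
  | _ a c =>
    rw [SimpleGraph.mem_edgeFinset, SimpleGraph.mem_edgeSet] at he
    exact ⟨a, c, he.ne, rfl, he⟩

lemma pairFilter {a c : V} (h : a ≠ c) :
    univ.filter (fun i => i ∈ (s(a, c) : Sym2 V)) = {a, c} := by
  ext i
  simp [Sym2.mem_iff]

/-- fractional degree of `z` at vertex `i`. -/
noncomputable def dsum (z : Sym2 V → ℝ) (i : V) : ℝ :=
  ∑ e ∈ G.edgeFinset.filter (fun e => i ∈ e), z e

/-- fractional weight. -/
noncomputable def wsum (z : Sym2 V → ℝ) : ℝ := ∑ e ∈ G.edgeFinset, w e * z e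

/-- the box `[0,1]^E`. -/
def Box : Set (Sym2 V → ℝ) :=
  Set.univ.pi (fun e => if e ∈ G.edgeFinset then Set.Icc (0 : ℝ) 1 else {0})

/-- fractional `b`-matchings. -/
def Zf : Set (Sym2 V → ℝ) := {z | z ∈ Box G ∧ ∀ i, dsum G z i ≤ (b i : ℝ)}

/-- the fractional optimum. -/
noncomputable def nuf : ℝ := sSup {r | ∃ z ∈ Zf G b, r = wsum G w z}

noncomputable def ysum (y : V → ℝ) (e : Sym2 V) : ℝ := ∑ i ∈ univ.filter (· ∈ e), y i

noncomputable def mu (y : V → ℝ) (e : Sym2 V) : ℝ := max 0 (w e - ysum y e)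

noncomputable def hval (y : V → ℝ) : ℝ :=
  ∑ i, (b i : ℝ) * y i + ∑ e ∈ G.edgeFinset, mu w y e

lemma ysum_pair {y : V → ℝ} {a c : V} (h : a ≠ c) :
    ysum y s(a, c) = y a + y c := by
  rw [ysum, pairFilter h, Finset.sum_pair h]

lemma box_mem_iff {z : Sym2 V → ℝ} :
    z ∈ Box G ↔ (∀ e ∈ G.edgeFinset, z e ∈ Set.Icc (0:ℝ) 1) ∧
      ∀ e ∉ G.edgeFinset, z e = 0 := by
  constructor
  · intro hz
    constructor
    · intro e he; have := hz e (Set.mem_univ e); simp only [if_pos he] at this; exact this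
    · intro e he; have := hz e (Set.mem_univ e); simp only [if_neg he] at this
      simpa using this
  · intro ⟨h1, h2⟩ e _
    by_cases he : e ∈ G.edgeFinset
    · simp only [if_pos he]; exact h1 e he
    · simp only [if_neg he]; simpa using h2 e he

lemma box_convex : Convex ℝ (Box G) := by
  apply convex_pi
  intro e _
  split
  · exact convex_Icc 0 1
  · exact convex_singleton 0

lemma box_compact : IsCompact (Box G) := by
  apply isCompact_univ_pi
  intro e
  split
  · exact isCompact_Icc
  · exact isCompact_singleton

lemma zero_mem_box : (0 : Sym2 V → ℝ) ∈ Box G := by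
  rw [box_mem_iff]
  exact ⟨fun e _ => ⟨le_refl 0, zero_le_one⟩, fun e _ => rfl⟩

lemma dsum_continuous (i : V) : Continuous (fun z : Sym2 V → ℝ => dsum G z i) := by
  apply continuous_finset_sum
  intro e _
  exact continuous_apply e

lemma wsum_continuous : Continuous (wsum G w) := by
  apply continuous_finset_sum
  intro e _
  exact continuous_const.mul (continuous_apply e)

lemma dsum_add (z z' : Sym2 V → ℝ) (i : V) :
    dsum G (z + z') i = dsum G z i + dsum G z' i := by
  simp [dsum, Finset.sum_add_distrib]

lemma dsum_smul (a : ℝ) (z : Sym2 V → ℝ) (i : V) :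
    dsum G (a • z) i = a * dsum G z i := by
  simp [dsum, Finset.mul_sum]

lemma wsum_add (z z' : Sym2 V → ℝ) :
    wsum G w (z + z') = wsum G w z + wsum G w z' := by
  simp [wsum, mul_add, Finset.sum_add_distrib]

lemma wsum_smul (a : ℝ) (z : Sym2 V → ℝ) :
    wsum G w (a • z) = a * wsum G w z := by
  simp [wsum, Finset.mul_sum]; congr 1; ext e; ring

/-- sum of `ysum` over a set of edges, by double counting. -/
lemma sum_ysum (y : V → ℝ) (M : Finset (Sym2 V)) :
    ∑ e ∈ M, ysum y e = ∑ i, ((M.filter (fun e => i ∈ e)).card : ℝ) * y i := by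
  have : ∀ e ∈ M, ysum y e = ∑ i, (if i ∈ e then y i else 0) := by
    intro e _
    rw [ysum, Finset.sum_filter]
  rw [Finset.sum_congr rfl this, Finset.sum_comm]
  refine Finset.sum_congr rfl (fun i _ => ?_)
  calc ∑ e ∈ M, (if i ∈ e then y i else 0)
      = ∑ e ∈ M.filter (fun e => i ∈ e), y i := (Finset.sum_filter _ _).symm
    _ = (M.filter (fun e => i ∈ e)).card • y i := Finset.sum_const _
    _ = ((M.filter (fun e => i ∈ e)).card : ℝ) * y i := nsmul_eq_mul _ _

lemma dsum_swap (z : Sym2 V → ℝ) (y : V → ℝ) :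
    ∑ i, dsum G z i * y i = ∑ e ∈ G.edgeFinset, z e * ysum y e := by
  have h1 : ∀ i, dsum G z i * y i = ∑ e ∈ G.edgeFinset, (if i ∈ e then z e * y i else 0) := by
    intro i
    rw [dsum, Finset.sum_mul, Finset.sum_filter]
  have h2 : ∀ e ∈ G.edgeFinset, z e * ysum y e = ∑ i, (if i ∈ e then z e * y i else 0) := by
    intro e _
    rw [ysum, Finset.mul_sum, Finset.sum_filter]
  rw [Finset.sum_congr rfl (fun i _ => h1 i), Finset.sum_congr rfl h2, Finset.sum_comm]


lemma mu_nonneg (y : V → ℝ) (e : Sym2 V) : 0 ≤ mu w y e := le_max_left _ _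

lemma w_le_ysum_add_mu (y : V → ℝ) (e : Sym2 V) : w e ≤ ysum y e + mu w y e := by
  have : w e - ysum y e ≤ mu w y e := le_max_right _ _
  linarith

lemma bVal_le_weak (y : V → ℝ) (hy : ∀ i, 0 ≤ y i) (S : Finset V) :
    bVal G b w S ≤ ∑ i ∈ S, (b i : ℝ) * y i +
      ∑ e ∈ G.edgeFinset.filter (fun e => pick e ∈ S), mu w y e := by
  apply bVal_le
  intro M hM hMS
  have hME : M ⊆ G.edgeFinset := fun e he => SimpleGraph.mem_edgeFinset.2 (hM.1 e he)
  have step1 : mWeight w M ≤ ∑ e ∈ M, ysum y e + ∑ e ∈ M, mu w y e := by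
    rw [mWeight, ← Finset.sum_add_distrib]
    exact Finset.sum_le_sum fun e _ => w_le_ysum_add_mu w y e
  have step2 : ∑ e ∈ M, ysum y e ≤ ∑ i ∈ S, (b i : ℝ) * y i := by
    rw [sum_ysum]
    have hvanish : ∀ i ∈ univ, i ∉ S → ((M.filter (fun e => i ∈ e)).card : ℝ) * y i = 0 := by
      intro i _ hiS
      have hemp : M.filter (fun e => i ∈ e) = ∅ := by
        rw [Finset.filter_eq_empty_iff]
        intro e he hie
        exact hiS (hMS e he i hie)
      rw [hemp]; simp
    rw [← Finset.sum_subset (Finset.subset_univ S) hvanish]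
    refine Finset.sum_le_sum fun i _ => ?_
    apply mul_le_mul_of_nonneg_right _ (hy i)
    exact_mod_cast hM.2 i
  have step3 : ∑ e ∈ M, mu w y e ≤
      ∑ e ∈ G.edgeFinset.filter (fun e => pick e ∈ S), mu w y e := by
    apply Finset.sum_le_sum_of_subset_of_nonneg
    · intro e he
      exact Finset.mem_filter.2 ⟨hME he, hMS e he _ (pick_mem e)⟩
    · intro e _ _; exact mu_nonneg w y e
  linarith

lemma hval_split (y : V → ℝ) (S : Finset V) :
    ∑ i ∈ S, ((b i : ℝ) * y i + ∑ e ∈ G.edgeFinset.filter (fun e => pick e = i), mu w y e)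
      = ∑ i ∈ S, (b i : ℝ) * y i +
        ∑ e ∈ G.edgeFinset.filter (fun e => pick e ∈ S), mu w y e := by
  rw [Finset.sum_add_distrib]
  congr 1
  exact Finset.sum_fiberwise_eq_sum_filter G.edgeFinset S pick (mu w y)

lemma nuf_bdd (hw : ∀ e ∈ G.edgeSet, 0 < w e) :
    BddAbove {r | ∃ z ∈ Zf G b, r = wsum G w z} := by
  refine ⟨∑ e ∈ G.edgeFinset, w e, ?_⟩
  rintro r ⟨z, ⟨hzB, hzd⟩, rfl⟩
  rw [box_mem_iff] at hzB
  refine Finset.sum_le_sum fun e he => ?_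
  have hw0 : 0 ≤ w e := (hw e (SimpleGraph.mem_edgeFinset.1 he)).le
  have h2 := hzB.1 e he
  calc w e * z e ≤ w e * 1 := mul_le_mul_of_nonneg_left h2.2 hw0
    _ = w e := mul_one _

lemma wsum_le_nuf (hw : ∀ e ∈ G.edgeSet, 0 < w e) {z : Sym2 V → ℝ} (hz : z ∈ Zf G b) :
    wsum G w z ≤ nuf G b w :=
  le_csSup (nuf_bdd G b w hw) ⟨z, hz, rfl⟩

lemma exists_dual_eps (hw : ∀ e ∈ G.edgeSet, 0 < w e) {γ : ℝ} (hγ : 0 < γ) :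
    ∃ y : V → ℝ, (∀ i, 0 ≤ y i) ∧ hval G b w y < nuf G b w + γ := by
  classical
  set sSet : Set ((V → ℝ) × ℝ) :=
    {p | ∃ z ∈ Box G, (∀ i, dsum G z i ≤ p.1 i) ∧ p.2 ≤ wsum G w z} with hsSetdef
  have hzero : ((0 : V → ℝ), (0 : ℝ)) ∈ sSet := by
    refine ⟨0, zero_mem_box G, fun i => ?_, ?_⟩
    · simp [dsum]
    · simp [wsum]
  have hconv : Convex ℝ sSet := by
    rintro p ⟨z1, hz1, hd1, hw1⟩ q ⟨z2, hz2, hd2, hw2⟩ a c ha hc hac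
    refine ⟨a • z1 + c • z2, box_convex G hz1 hz2 ha hc hac, fun i => ?_, ?_⟩
    · rw [dsum_add, dsum_smul, dsum_smul]
      have e1 : (a • p + c • q).1 i = a * p.1 i + c * q.1 i := rfl
      rw [e1]
      exact add_le_add (mul_le_mul_of_nonneg_left (hd1 i) ha)
        (mul_le_mul_of_nonneg_left (hd2 i) hc)
    · rw [wsum_add, wsum_smul, wsum_smul]
      have e1 : (a • p + c • q).2 = a * p.2 + c * q.2 := rfl
      rw [e1]
      exact add_le_add (mul_le_mul_of_nonneg_left hw1 ha)
        (mul_le_mul_of_nonneg_left hw2 hc)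
  have hclosed : IsClosed sSet := by
    apply IsSeqClosed.isClosed
    intro p q hp hq
    choose z hzB hzd hzw using hp
    obtain ⟨z0, hz0B, φ, hφ, hφt⟩ := (box_compact G).tendsto_subseq hzB
    have hpq : Filter.Tendsto (p ∘ φ) Filter.atTop (nhds q) :=
      hq.comp hφ.tendsto_atTop
    refine ⟨z0, hz0B, fun i => ?_, ?_⟩
    · have t1 : Filter.Tendsto (fun n => dsum G (z (φ n)) i) Filter.atTop
          (nhds (dsum G z0 i)) := ((dsum_continuous G i).tendsto z0).comp hφt
      have t2 : Filter.Tendsto (fun n => (p (φ n)).1 i) Filter.atTop (nhds (q.1 i)) :=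
        (((continuous_apply i).comp continuous_fst).tendsto q).comp hpq
      exact le_of_tendsto_of_tendsto' t1 t2 (fun n => hzd (φ n) i)
    · have t1 : Filter.Tendsto (fun n => wsum G w (z (φ n))) Filter.atTop
          (nhds (wsum G w z0)) := ((wsum_continuous G w).tendsto z0).comp hφt
      have t2 : Filter.Tendsto (fun n => (p (φ n)).2) Filter.atTop (nhds q.2) :=
        (continuous_snd.tendsto q).comp hpq
      exact le_of_tendsto_of_tendsto' t2 t1 (fun n => hzw (φ n))
  have hx : (((fun i => (b i : ℝ)) : V → ℝ), nuf G b w + γ) ∉ sSet := by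
    rintro ⟨z, hzB, hzd, hzw⟩
    have h1 : wsum G w z ≤ nuf G b w := wsum_le_nuf G b w hw ⟨hzB, hzd⟩
    have h2 : nuf G b w + γ ≤ wsum G w z := hzw
    linarith
  obtain ⟨f, u, hfs, hfx⟩ := geometric_hahn_banach_closed_point hconv hclosed hx
  set φv : V → ℝ := fun i => f (Pi.single i 1, 0) with hφvdef
  set α : ℝ := f (0, 1) with hαdef
  have hdecomp : ∀ (v : V → ℝ) (r : ℝ), f (v, r) = (∑ i, v i * φv i) + r * α := by
    intro v r
    have h1 : (v, r) = (v, (0:ℝ)) + r • ((0 : V → ℝ), (1:ℝ)) := by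
      simp [Prod.ext_iff]
    have h2 : f (v, (0:ℝ)) = ∑ i, v i * φv i := by
      have e0 : f (v, (0:ℝ)) = (f.toLinearMap.comp (LinearMap.inl ℝ (V → ℝ) ℝ)) v := rfl
      rw [e0, LinearMap.pi_apply_eq_sum_univ]
      refine Finset.sum_congr rfl fun i _ => ?_
      rw [smul_eq_mul]
      congr 1
      have e1 : (fun j => if i = j then (1:ℝ) else 0) = Pi.single i 1 := by
        funext j
        simp [Pi.single_apply, eq_comm]
      show (f.toLinearMap.comp (LinearMap.inl ℝ (V → ℝ) ℝ)) (fun j => if i = j then (1:ℝ) else 0) = φv i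
      rw [e1]
      rfl
    rw [h1, map_add, map_smul, h2, smul_eq_mul]
  have hu0 : 0 < u := by
    have h1 := hfs _ hzero
    have h2 : f ((0 : V → ℝ), (0:ℝ)) = 0 := by
      have : ((0 : V → ℝ), (0:ℝ)) = (0 : (V → ℝ) × ℝ) := rfl
      rw [this, map_zero]
    rw [h2] at h1
    exact h1
  have hφ_nonpos : ∀ i, φv i ≤ 0 := by
    intro i
    by_contra hpos
    push_neg at hpos
    set K := (u + 1) / φv i with hKdef
    have hK : 0 ≤ K := (div_pos (by linarith) hpos).le
    have hmem : (((fun j => if j = i then K else 0) : V → ℝ), (0:ℝ)) ∈ sSet := by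
      refine ⟨0, zero_mem_box G, fun j => ?_, by simp [wsum]⟩
      have e1 : dsum G 0 j = 0 := by simp [dsum]
      rw [e1]
      by_cases hji : j = i <;> simp [hji, hK]
    have h1 := hfs _ hmem
    have h2 : f (((fun j => if j = i then K else 0) : V → ℝ), (0:ℝ)) = K * φv i := by
      have e1 : (((fun j => if j = i then K else 0) : V → ℝ), (0:ℝ))
          = K • (((Pi.single i 1 : V → ℝ)), (0:ℝ)) := by
        rw [Prod.smul_mk]
        refine Prod.ext ?_ (by simp)
        funext j
        by_cases hji : j = i <;> simp [hji]
      rw [e1, map_smul, smul_eq_mul]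
    rw [h2, hKdef, div_mul_cancel₀ _ (ne_of_gt hpos)] at h1
    linarith
  have hα_nonneg : 0 ≤ α := by
    by_contra hneg
    push_neg at hneg
    set K := (u + 1) / (-α) with hKdef
    have hK : 0 ≤ K := (div_pos (by linarith) (by linarith)).le
    have hmem : ((0 : V → ℝ), -K) ∈ sSet := by
      refine ⟨0, zero_mem_box G, fun j => ?_, ?_⟩
      · simp [dsum]
      · simp only [wsum]
        simp
        linarith
    have h1 := hfs _ hmem
    have h2 : f ((0 : V → ℝ), -K) = -K * α := by
      have e1 : ((0 : V → ℝ), -K) = (-K) • ((0 : V → ℝ), (1:ℝ)) := by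
        ext <;> simp
      rw [e1, map_smul, smul_eq_mul]
    rw [h2] at h1
    have h3 : K * (-α) = u + 1 := by
      rw [hKdef]
      exact div_mul_cancel₀ _ (by linarith)
    have h4 : -K * α = K * (-α) := by ring
    linarith
  have hαpos : 0 < α := by
    rcases hα_nonneg.lt_or_eq with h | h
    · exact h
    · exfalso
      rw [hdecomp] at hfx
      rw [← h] at hfx
      have hsum_nonpos : ∑ i, (b i : ℝ) * φv i ≤ 0 :=
        Finset.sum_nonpos fun i _ =>
          mul_nonpos_of_nonneg_of_nonpos (Nat.cast_nonneg _) (hφ_nonpos i)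
      simp only [mul_zero, add_zero] at hfx
      linarith
  set y : V → ℝ := fun i => -φv i / α with hydef
  have hy0 : ∀ i, 0 ≤ y i := fun i =>
    div_nonneg (neg_nonneg.2 (hφ_nonpos i)) hαpos.le
  have hφy : ∀ i, φv i = -(α * y i) := by
    intro i
    rw [hydef]
    field_simp
  have hsumy : ∀ g : V → ℝ, ∑ i, g i * φv i = -(α * ∑ i, g i * y i) := by
    intro g
    calc ∑ i, g i * φv i = ∑ i, -(α * (g i * y i)) :=
          Finset.sum_congr rfl (fun i _ => by rw [hφy i]; ring)
      _ = -∑ i, α * (g i * y i) := by rw [Finset.sum_neg_distrib]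
      _ = -(α * ∑ i, g i * y i) := by rw [Finset.mul_sum]
  have hkey : ∀ z ∈ Box G, wsum G w z - ∑ i, dsum G z i * y i <
      nuf G b w + γ - ∑ i, (b i : ℝ) * y i := by
    intro z hz
    have hmemz : ((fun i => dsum G z i), wsum G w z) ∈ sSet :=
      ⟨z, hz, fun i => le_refl _, le_refl _⟩
    have h1 := (hfs _ hmemz).trans hfx
    rw [hdecomp, hdecomp] at h1
    rw [hsumy, hsumy] at h1
    have h2 : α * (wsum G w z - ∑ i, dsum G z i * y i) <
        α * (nuf G b w + γ - ∑ i, (b i : ℝ) * y i) := by ring_nf; ring_nf at h1; linarith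
    exact (mul_lt_mul_iff_right₀ hαpos).mp h2
  set zs : Sym2 V → ℝ := fun e => if e ∈ G.edgeFinset ∧ 0 < w e - ysum y e then 1 else 0
    with hzsdef
  have hzsB : zs ∈ Box G := by
    rw [box_mem_iff]
    constructor
    · intro e he
      show (if e ∈ G.edgeFinset ∧ 0 < w e - ysum y e then (1:ℝ) else 0) ∈ Set.Icc (0:ℝ) 1
      split
      · exact ⟨zero_le_one, le_refl 1⟩
      · exact ⟨le_refl 0, zero_le_one⟩
    · intro e he
      show (if e ∈ G.edgeFinset ∧ 0 < w e - ysum y e then (1:ℝ) else 0) = 0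
      rw [if_neg (fun h => he h.1)]
  have hcomp : wsum G w zs - ∑ i, dsum G zs i * y i = ∑ e ∈ G.edgeFinset, mu w y e := by
    rw [dsum_swap, wsum, ← Finset.sum_sub_distrib]
    refine Finset.sum_congr rfl fun e he => ?_
    show w e * (if e ∈ G.edgeFinset ∧ 0 < w e - ysum y e then (1:ℝ) else 0) -
      (if e ∈ G.edgeFinset ∧ 0 < w e - ysum y e then (1:ℝ) else 0) * ysum y e = mu w y e
    by_cases hpos : 0 < w e - ysum y e
    · rw [if_pos ⟨he, hpos⟩, mu, max_eq_right hpos.le]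
      ring
    · rw [if_neg (fun h => hpos h.2), mu, max_eq_left (by linarith [not_lt.1 hpos])]
      ring
  have hfin := hkey zs hzsB
  rw [hcomp] at hfin
  refine ⟨y, hy0, ?_⟩
  rw [hval]
  linarith

lemma exists_dual' (hw : ∀ e ∈ G.edgeSet, 0 < w e) :
    ∃ y : V → ℝ, (∀ i, 0 ≤ y i) ∧ hval G b w y ≤ nuf G b w := by
  classical
  set C : ℝ := 1 + ∑ e ∈ G.edgeFinset, max (w e) 0 with hCdef
  have hsum0 : 0 ≤ ∑ e ∈ G.edgeFinset, max (w e) 0 :=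
    Finset.sum_nonneg fun e _ => le_max_right _ _
  have hC0 : 0 ≤ C := by linarith
  have hCw : ∀ e ∈ G.edgeFinset, w e < C := by
    intro e he
    have h1 : w e ≤ max (w e) 0 := le_max_left _ _
    have h2 : max (w e) 0 ≤ ∑ e ∈ G.edgeFinset, max (w e) 0 :=
      Finset.single_le_sum (fun e _ => le_max_right (w e) 0) he
    linarith
  set K : Set (V → ℝ) := Set.univ.pi (fun _ => Set.Icc 0 C) with hKdef
  have hKc : IsCompact K := isCompact_univ_pi fun i => isCompact_Icc
  have hKne : K.Nonempty := ⟨0, fun i _ => ⟨le_refl 0, hC0⟩⟩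
  have hcont : Continuous (hval G b w) := by
    apply Continuous.add
    · apply continuous_finset_sum
      intro i _
      exact continuous_const.mul (continuous_apply i)
    · apply continuous_finset_sum
      intro e _
      apply Continuous.max continuous_const
      apply Continuous.sub continuous_const
      apply continuous_finset_sum
      intro i _
      exact continuous_apply i
  obtain ⟨ys, hysK, hymin⟩ := hKc.exists_isMinOn hKne hcont.continuousOn
  have hys0 : ∀ i, 0 ≤ ys i := fun i => (hysK i (Set.mem_univ i)).1
  refine ⟨ys, hys0, ?_⟩
  by_contra hcon
  push_neg at hcon
  set γ := (hval G b w ys - nuf G b w) / 2 with hγdef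
  have hγ0 : 0 < γ := by rw [hγdef]; linarith
  obtain ⟨y, hy0, hyval⟩ := exists_dual_eps G b w hw hγ0
  set yc : V → ℝ := fun i => min (y i) C with hycdef
  have hycK : yc ∈ K := by
    intro i _
    exact ⟨le_min (hy0 i) hC0, min_le_right _ _⟩
  have hcap : hval G b w yc ≤ hval G b w y := by
    rw [hval, hval]
    apply add_le_add
    · refine Finset.sum_le_sum fun i _ => ?_
      rw [hycdef]
      exact mul_le_mul_of_nonneg_left (min_le_left _ _) (Nat.cast_nonneg _)
    · refine Finset.sum_le_sum fun e he => ?_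
      obtain ⟨a, c, hac, rfl, hadj⟩ := edge_rep G he
      rw [mu, mu, ysum_pair hac, ysum_pair hac]
      by_cases hca : y a ≤ C
      · by_cases hcc : y c ≤ C
        · rw [hycdef]
          simp only
          rw [min_eq_left hca, min_eq_left hcc]
        · have h5 : yc c = C := by rw [hycdef]; exact min_eq_right (le_of_not_ge hcc)
          have h6 : 0 ≤ yc a := le_min (hy0 a) hC0
          have h7 : w s(a, c) < C := hCw _ he
          have h8 : w s(a, c) - (yc a + yc c) ≤ 0 := by rw [h5]; linarith
          rw [max_eq_left h8]
          exact le_max_left _ _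
      · have h5 : yc a = C := by rw [hycdef]; exact min_eq_right (le_of_not_ge hca)
        have h6 : 0 ≤ yc c := le_min (hy0 c) hC0
        have h7 : w s(a, c) < C := hCw _ he
        have h8 : w s(a, c) - (yc a + yc c) ≤ 0 := by rw [h5]; linarith
        rw [max_eq_left h8]
        exact le_max_left _ _
  have hmin := (isMinOn_iff.mp hymin) yc hycK
  have : hval G b w ys ≤ nuf G b w + γ := le_trans hmin (le_trans hcap hyval.le)
  rw [hγdef] at this
  linarith


/-- the set of fractional edges. -/
noncomputable def FracSet (z : Sym2 V → ℝ) : Finset (Sym2 V) :=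
  G.edgeFinset.filter (fun e => 0 < z e ∧ z e < 1)

/-- the set of slack vertices. -/
noncomputable def SlackSet (z : Sym2 V → ℝ) : Finset V :=
  univ.filter (fun i => dsum G z i < (b i : ℝ))

lemma FracSet_subset (z : Sym2 V → ℝ) : FracSet G z ⊆ G.edgeFinset :=
  Finset.filter_subset _ _

lemma mem_FracSet {z : Sym2 V → ℝ} {e : Sym2 V} :
    e ∈ FracSet G z ↔ e ∈ G.edgeFinset ∧ (0 < z e ∧ z e < 1) := Finset.mem_filter

lemma sum_zero_one {s : Finset (Sym2 V)} {z : Sym2 V → ℝ}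
    (h : ∀ e ∈ s, z e = 0 ∨ z e = 1) :
    ∑ e ∈ s, z e = ((s.filter (fun e => z e = 1)).card : ℝ) := by
  rw [← Finset.sum_filter_add_sum_filter_not s (fun e => z e = 1) z]
  have h1 : ∑ e ∈ s.filter (fun e => z e = 1), z e
      = ((s.filter (fun e => z e = 1)).card : ℝ) := by
    rw [Finset.sum_congr rfl (fun e he => (Finset.mem_filter.1 he).2)]
    simp
  have h2 : ∑ e ∈ s.filter (fun e => ¬ z e = 1), z e = 0 := by
    apply Finset.sum_eq_zero
    intro e he
    rcases h e (Finset.mem_filter.1 he).1 with h0 | h1'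
    · exact h0
    · exact absurd h1' (Finset.mem_filter.1 he).2
  rw [h1, h2, add_zero]

lemma two_frac_edges {z : Sym2 V → ℝ} (hz : z ∈ Zf G b) {i : V}
    (htight : dsum G z i = (b i : ℝ)) {e1 : Sym2 V} (he1 : e1 ∈ FracSet G z)
    (hie1 : i ∈ e1) :
    2 ≤ ((FracSet G z).filter (fun e => i ∈ e)).card := by
  by_contra hlt
  push_neg at hlt
  have hge1 : 1 ≤ ((FracSet G z).filter (fun e => i ∈ e)).card :=
    Finset.card_pos.2 ⟨e1, Finset.mem_filter.2 ⟨he1, hie1⟩⟩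
  have hcard1 : ((FracSet G z).filter (fun e => i ∈ e)).card = 1 := by omega
  obtain ⟨e0, he0⟩ := Finset.card_eq_one.1 hcard1
  have he10 : e1 = e0 := by
    have hmm : e1 ∈ ({e0} : Finset (Sym2 V)) := he0 ▸ Finset.mem_filter.2 ⟨he1, hie1⟩
    simpa using hmm
  obtain ⟨hzB, hzd⟩ := hz
  rw [box_mem_iff] at hzB
  have hfid : (G.edgeFinset.filter (fun e => i ∈ e)).filter (fun e => e ∈ FracSet G z)
      = (FracSet G z).filter (fun e => i ∈ e) := by
    ext e
    simp only [Finset.mem_filter, mem_FracSet]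
    tauto
  have h01 : ∀ e ∈ (G.edgeFinset.filter (fun e => i ∈ e)).filter
      (fun e => ¬ e ∈ FracSet G z), z e = 0 ∨ z e = 1 := by
    intro e he
    obtain ⟨he', heF⟩ := Finset.mem_filter.1 he
    obtain ⟨heE, -⟩ := Finset.mem_filter.1 he'
    obtain ⟨h0, h1⟩ := hzB.1 e heE
    rcases eq_or_lt_of_le h0 with h | h
    · exact Or.inl h.symm
    rcases eq_or_lt_of_le h1 with h' | h'
    · exact Or.inr h'
    · exact absurd ((mem_FracSet G).2 ⟨heE, h, h'⟩) heF
  have hd : dsum G z i = z e1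
      + ((((G.edgeFinset.filter (fun e => i ∈ e)).filter
          (fun e => ¬ e ∈ FracSet G z)).filter (fun e => z e = 1)).card : ℝ) := by
    rw [dsum, ← Finset.sum_filter_add_sum_filter_not (G.edgeFinset.filter (fun e => i ∈ e))
      (fun e => e ∈ FracSet G z) z, hfid, he0, Finset.sum_singleton, ← he10,
      sum_zero_one h01]
  obtain ⟨-, hpos, hlt1⟩ := (mem_FracSet G).1 he1
  rw [htight] at hd
  set n := (((G.edgeFinset.filter (fun e => i ∈ e)).filter
      (fun e => ¬ e ∈ FracSet G z)).filter (fun e => z e = 1)).card with hn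
  have hx1 : (n : ℝ) < (b i : ℝ) := by linarith
  have hx2 : (b i : ℝ) < (n : ℝ) + 1 := by linarith
  have hy1 : n < b i := by exact_mod_cast hx1
  have hy2 : (b i : ℝ) < ((n + 1 : ℕ) : ℝ) := by push_cast; linarith
  have hy2' : b i < n + 1 := by exact_mod_cast hy2
  omega

lemma push {z : Sym2 V → ℝ} (hz : z ∈ Zf G b) {τ : Sym2 V → ℝ}
    (hsupp : ∀ e ∉ FracSet G z, τ e = 0)
    (htight : ∀ i, dsum G z i = (b i : ℝ) → dsum G τ i = 0)
    (hne : ∃ e ∈ FracSet G z, τ e ≠ 0) :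
    ∃ ε : ℝ, 0 < ε ∧ z + ε • τ ∈ Zf G b ∧
      ((∃ e ∈ FracSet G z, τ e ≠ 0 ∧ (z e + ε * τ e = 0 ∨ z e + ε * τ e = 1)) ∨
       (∃ i ∈ SlackSet G b z, 0 < dsum G τ i ∧
          dsum G z i + ε * dsum G τ i = (b i : ℝ))) := by
  classical
  obtain ⟨e0, he0F, he0τ⟩ := hne
  set F' := (FracSet G z).filter (fun e => τ e ≠ 0) with hF'def
  have hF'ne : F'.Nonempty := ⟨e0, Finset.mem_filter.2 ⟨he0F, he0τ⟩⟩
  set TH := F'.image (fun e => if 0 < τ e then (1 - z e) / τ e else z e / (-τ e)) ∪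
      ((SlackSet G b z).filter (fun i => 0 < dsum G τ i)).image
        (fun i => ((b i : ℝ) - dsum G z i) / dsum G τ i) with hTHdef
  have hTHne : TH.Nonempty := Finset.Nonempty.inl (hF'ne.image _)
  set ε := TH.min' hTHne with hεdef
  have hεmem : ε ∈ TH := TH.min'_mem hTHne
  have hεle : ∀ t ∈ TH, ε ≤ t := fun t ht => Finset.min'_le TH t ht
  obtain ⟨hzB, hzd⟩ := hz
  rw [box_mem_iff] at hzB
  have hfr : ∀ e ∈ FracSet G z, 0 < z e ∧ z e < 1 :=
    fun e he => ((mem_FracSet G).1 he).2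
  have hε0 : 0 < ε := by
    rw [hεdef]
    rw [Finset.lt_min'_iff]
    intro t ht
    rcases Finset.mem_union.1 ht with ht | ht
    · obtain ⟨e, heF', rfl⟩ := Finset.mem_image.1 ht
      obtain ⟨heF, heτ⟩ := Finset.mem_filter.1 heF'
      obtain ⟨h1, h2⟩ := hfr e heF
      split
      · next hpos => exact div_pos (by linarith) hpos
      · next hpos =>
          have hτneg : τ e < 0 := lt_of_le_of_ne (not_lt.1 hpos) heτ
          exact div_pos h1 (by linarith)
    · obtain ⟨i, hi, rfl⟩ := Finset.mem_image.1 ht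
      obtain ⟨hiS, hsp⟩ := Finset.mem_filter.1 hi
      have hslack : dsum G z i < (b i : ℝ) := (Finset.mem_filter.1 hiS).2
      exact div_pos (by linarith) hsp
  have happ : ∀ e, (z + ε • τ) e = z e + ε * τ e := fun e => rfl
  have hdapp : ∀ i, dsum G (z + ε • τ) i = dsum G z i + ε * dsum G τ i := by
    intro i
    rw [dsum_add, dsum_smul]
  have hmemZf : z + ε • τ ∈ Zf G b := by
    constructor
    · rw [box_mem_iff]
      constructor
      · intro e he
        by_cases heF : e ∈ FracSet G z
        · by_cases heτ : τ e = 0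
          · rw [happ, heτ, mul_zero, add_zero]
            exact hzB.1 e he
          · have heF' : e ∈ F' := Finset.mem_filter.2 ⟨heF, heτ⟩
            obtain ⟨h1, h2⟩ := hfr e heF
            rw [happ]
            by_cases hτpos : 0 < τ e
            · have hle := hεle _ (Finset.mem_union_left _
                (Finset.mem_image_of_mem _ heF'))
              rw [if_pos hτpos] at hle
              have h3 : ε * τ e ≤ 1 - z e := (le_div_iff₀ hτpos).1 hle
              have h4 : 0 ≤ ε * τ e := le_of_lt (mul_pos hε0 hτpos)
              constructor <;> linarith
            · have hτneg : τ e < 0 := lt_of_le_of_ne (not_lt.1 hτpos) heτ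
              have hle := hεle _ (Finset.mem_union_left _
                (Finset.mem_image_of_mem _ heF'))
              rw [if_neg hτpos] at hle
              have h3 : ε * (-τ e) ≤ z e := (le_div_iff₀ (by linarith)).1 hle
              have h4 : ε * τ e ≤ 0 :=
                mul_nonpos_of_nonneg_of_nonpos hε0.le hτneg.le
              constructor <;> linarith
        · rw [happ, hsupp e heF, mul_zero, add_zero]
          exact hzB.1 e he
      · intro e he
        have h1 : τ e = 0 := hsupp e (fun hc => he (FracSet_subset G z hc))
        have h2 : z e = 0 := hzB.2 e he
        rw [happ, h1, h2, mul_zero, add_zero]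
    · intro i
      rw [hdapp]
      by_cases htighti : dsum G z i = (b i : ℝ)
      · rw [htight i htighti, mul_zero, add_zero, htighti]
      · have hslack : dsum G z i < (b i : ℝ) := lt_of_le_of_ne (hzd i) htighti
        by_cases hsp : 0 < dsum G τ i
        · have hiS : i ∈ SlackSet G b z :=
            Finset.mem_filter.2 ⟨Finset.mem_univ i, hslack⟩
          have hle := hεle _ (Finset.mem_union_right _
            (Finset.mem_image_of_mem _ (Finset.mem_filter.2 ⟨hiS, hsp⟩)))
          have h3 : ε * dsum G τ i ≤ (b i : ℝ) - dsum G z i := (le_div_iff₀ hsp).1 hle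
          linarith
        · have h3 : ε * dsum G τ i ≤ 0 :=
            mul_nonpos_of_nonneg_of_nonpos hε0.le (not_lt.1 hsp)
          linarith
  refine ⟨ε, hε0, hmemZf, ?_⟩
  rcases Finset.mem_union.1 hεmem with hmem | hmem
  · obtain ⟨e, heF', heq⟩ := Finset.mem_image.1 hmem
    obtain ⟨heF, heτ⟩ := Finset.mem_filter.1 heF'
    left
    refine ⟨e, heF, heτ, ?_⟩
    by_cases hτpos : 0 < τ e
    · right
      rw [if_pos hτpos] at heq
      rw [← heq, div_mul_cancel₀ _ (ne_of_gt hτpos)]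
      ring
    · left
      have hτneg : τ e < 0 := lt_of_le_of_ne (not_lt.1 hτpos) heτ
      rw [if_neg hτpos] at heq
      rw [← heq]
      have h3 : z e / (-τ e) * τ e = -z e := by
        rw [div_neg, neg_mul, div_mul_cancel₀ _ heτ]
      rw [h3]
      ring
  · obtain ⟨i, hi, heq⟩ := Finset.mem_image.1 hmem
    obtain ⟨hiS, hsp⟩ := Finset.mem_filter.1 hi
    right
    refine ⟨i, hiS, hsp, ?_⟩
    rw [← heq, div_mul_cancel₀ _ (ne_of_gt hsp)]
    ring

lemma dsum_neg (σ : Sym2 V → ℝ) (i : V) : dsum G (-σ) i = -dsum G σ i := by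
  simp [dsum]

lemma wsum_neg (σ : Sym2 V → ℝ) : wsum G w (-σ) = -wsum G w σ := by
  simp [wsum, Finset.sum_neg_distrib]

lemma surgery {z : Sym2 V → ℝ} (hz : z ∈ Zf G b) {σ : Sym2 V → ℝ}
    (hσsupp : ∀ e ∉ FracSet G z, σ e = 0)
    (hσne : ∃ e ∈ FracSet G z, σ e ≠ 0)
    (hσtight : ∀ i, dsum G z i = (b i : ℝ) → dsum G σ i = 0)
    (hopt : ∀ z' ∈ Zf G b, wsum G w z' ≤ wsum G w z) :
    ∃ z' ∈ Zf G b, wsum G w z' = wsum G w z ∧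
      ((FracSet G z').card < (FracSet G z).card ∨
        (FracSet G z' = FracSet G z ∧ (SlackSet G b z').card < (SlackSet G b z).card)) := by
  classical
  have hneg_supp : ∀ e ∉ FracSet G z, (-σ) e = 0 := fun e he => by
    simp [hσsupp e he]
  have hneg_tight : ∀ i, dsum G z i = (b i : ℝ) → dsum G (-σ) i = 0 := by
    intro i h
    rw [dsum_neg, hσtight i h, neg_zero]
  have hneg_ne : ∃ e ∈ FracSet G z, (-σ) e ≠ 0 := by
    obtain ⟨e, h1, h2⟩ := hσne
    exact ⟨e, h1, by simpa using h2⟩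
  obtain ⟨ε₁, hε₁, hz1, -⟩ := push G b hz hσsupp hσtight hσne
  obtain ⟨ε₂, hε₂, hz2, -⟩ := push G b hz hneg_supp hneg_tight hneg_ne
  have hwσ : wsum G w σ = 0 := by
    have h1 : wsum G w (z + ε₁ • σ) ≤ wsum G w z := hopt _ hz1
    have h2 : wsum G w (z + ε₂ • (-σ)) ≤ wsum G w z := hopt _ hz2
    rw [wsum_add, wsum_smul] at h1
    rw [wsum_add, wsum_smul, wsum_neg] at h2
    have hle : wsum G w σ ≤ 0 := by nlinarith
    have hge : 0 ≤ wsum G w σ := by nlinarith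
    linarith
  obtain ⟨ε, hε0, hmem, hact⟩ := push G b hz hσsupp hσtight hσne
  have happ : ∀ e, (z + ε • σ) e = z e + ε * σ e := fun e => rfl
  refine ⟨z + ε • σ, hmem, ?_, ?_⟩
  · rw [wsum_add, wsum_smul, hwσ, mul_zero, add_zero]
  · have hFsub : FracSet G (z + ε • σ) ⊆ FracSet G z := by
      intro e he
      obtain ⟨heE, hf1, hf2⟩ := (mem_FracSet G).1 he
      by_contra heF
      have hσ0 : σ e = 0 := hσsupp e heF
      rw [happ, hσ0, mul_zero, add_zero] at hf1 hf2
      exact heF ((mem_FracSet G).2 ⟨heE, hf1, hf2⟩)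
    rcases hact with ⟨e, heF, heτ, hval⟩ | ⟨i, hiS, hsp, hval⟩
    · left
      apply Finset.card_lt_card
      rw [Finset.ssubset_iff_of_subset hFsub]
      refine ⟨e, heF, ?_⟩
      intro hc
      obtain ⟨-, hg1, hg2⟩ := (mem_FracSet G).1 hc
      rw [happ] at hg1 hg2
      rcases hval with h0 | h1
      · rw [h0] at hg1; exact lt_irrefl _ hg1
      · rw [h1] at hg2; exact lt_irrefl _ hg2
    · have hSsub : SlackSet G b (z + ε • σ) ⊆ SlackSet G b z := by
        intro j hj
        have hj2 : dsum G (z + ε • σ) j < (b j : ℝ) := (Finset.mem_filter.1 hj).2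
        refine Finset.mem_filter.2 ⟨Finset.mem_univ _, ?_⟩
        by_contra hns
        have htj : dsum G z j = (b j : ℝ) := le_antisymm (hz.2 j) (not_lt.1 hns)
        rw [dsum_add, dsum_smul, hσtight j htj, mul_zero, add_zero, htj] at hj2
        exact lt_irrefl _ hj2
      have hiNot : i ∉ SlackSet G b (z + ε • σ) := by
        intro hc
        have hlt := (Finset.mem_filter.1 hc).2
        rw [dsum_add, dsum_smul, hval] at hlt
        exact lt_irrefl _ hlt
      have hSlt : (SlackSet G b (z + ε • σ)).card < (SlackSet G b z).card := by
        apply Finset.card_lt_card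
        rw [Finset.ssubset_iff_of_subset hSsub]
        exact ⟨i, hiS, hiNot⟩
      rcases lt_or_eq_of_le (Finset.card_le_card hFsub) with hlt | heq2
      · exact Or.inl hlt
      · exact Or.inr ⟨Finset.eq_of_subset_of_card_le hFsub (le_of_eq heq2.symm), hSlt⟩

lemma exists_kernel (A : Set V) (hbip : ∀ i j : V, G.Adj i j → (i ∈ A ↔ j ∉ A))
    {z : Sym2 V → ℝ} (hz : z ∈ Zf G b) (hne : (FracSet G z).Nonempty) :
    ∃ σ : Sym2 V → ℝ, (∃ e ∈ FracSet G z, σ e ≠ 0) ∧ (∀ e ∉ FracSet G z, σ e = 0) ∧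
      ∀ i, dsum G z i = (b i : ℝ) → dsum G σ i = 0 := by
  classical
  set F := FracSet G z with hFdef
  set T := univ.filter (fun i : V => dsum G z i = (b i : ℝ) ∧ ∃ e ∈ F, i ∈ e) with hTdef
  set Φfun : ({e // e ∈ F} → ℝ) → ({i // i ∈ T} → ℝ) :=
    fun σ i => ∑ e : {e // e ∈ F}, (if (i : V) ∈ (e : Sym2 V) then σ e else 0) with hΦfundef
  have hΦadd : ∀ σ τ, Φfun (σ + τ) = Φfun σ + Φfun τ := by
    intro σ τ
    funext i
    simp only [hΦfundef, Pi.add_apply]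
    rw [← Finset.sum_add_distrib]
    refine Finset.sum_congr rfl fun e _ => ?_
    split <;> simp
  have hΦsmul : ∀ (a : ℝ) σ, Φfun (a • σ) = a • Φfun σ := by
    intro a σ
    funext i
    simp only [hΦfundef, Pi.smul_apply, smul_eq_mul]
    rw [Finset.mul_sum]
    refine Finset.sum_congr rfl fun e _ => ?_
    split <;> simp
  set Φ : ({e // e ∈ F} → ℝ) →ₗ[ℝ] ({i // i ∈ T} → ℝ) :=
    { toFun := Φfun, map_add' := hΦadd, map_smul' := hΦsmul } with hΦdef
  have hΦapp : ∀ σ i, Φ σ i = ∑ e : {e // e ∈ F},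
      (if (i : V) ∈ (e : Sym2 V) then σ e else 0) := fun σ i => rfl
  by_cases hker : ∃ σ : {e // e ∈ F} → ℝ, σ ≠ 0 ∧ Φ σ = 0
  · obtain ⟨σ, hσ0, hσk⟩ := hker
    refine ⟨fun e => if h : e ∈ F then σ ⟨e, h⟩ else 0, ?_, ?_, ?_⟩
    · obtain ⟨a, ha⟩ := Function.ne_iff.1 hσ0
      refine ⟨a, a.2, ?_⟩
      show (if h : (a : Sym2 V) ∈ F then σ ⟨(a : Sym2 V), h⟩ else 0) ≠ 0
      rw [dif_pos a.2]
      simpa [Subtype.coe_eta] using ha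
    · intro e he
      exact dif_neg he
    · intro i htighti
      by_cases hif : ∃ e ∈ F, i ∈ e
      · have hiT : i ∈ T := by
          rw [hTdef]
          exact Finset.mem_filter.2 ⟨Finset.mem_univ i, htighti, hif⟩
        have hstep1 : dsum G (fun e => if h : e ∈ F then σ ⟨e, h⟩ else 0) i
            = ∑ e ∈ F.filter (fun e => i ∈ e),
                (if h : e ∈ F then σ ⟨e, h⟩ else 0) := by
          rw [dsum]
          symm
          apply Finset.sum_subset
          · exact Finset.filter_subset_filter _ (FracSet_subset G z)
          · intro e heE heF
            have hie : i ∈ e := (Finset.mem_filter.1 heE).2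
            have heF' : e ∉ F := fun hc => heF (Finset.mem_filter.2 ⟨hc, hie⟩)
            exact dif_neg heF'
        have hstep2 : ∑ e ∈ F.filter (fun e => i ∈ e),
              (if h : e ∈ F then σ ⟨e, h⟩ else 0)
            = ∑ e ∈ F, (if i ∈ e then (if h : e ∈ F then σ ⟨e, h⟩ else 0) else 0) :=
          Finset.sum_filter _ _
        have hstep3 : ∑ e ∈ F, (if i ∈ e then (if h : e ∈ F then σ ⟨e, h⟩ else 0) else 0)
            = ∑ e : {e // e ∈ F},
                (if (i : V) ∈ (e : Sym2 V) then
                  (if h : (e : Sym2 V) ∈ F then σ ⟨(e : Sym2 V), h⟩ else 0) else 0) :=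
          Finset.sum_subtype F (fun x => Iff.rfl) _
        have hstep4 : ∑ e : {e // e ∈ F},
              (if (i : V) ∈ (e : Sym2 V) then
                (if h : (e : Sym2 V) ∈ F then σ ⟨(e : Sym2 V), h⟩ else 0) else 0)
            = Φ σ ⟨i, hiT⟩ := by
          rw [hΦapp]
          refine Finset.sum_congr rfl fun e _ => ?_
          congr 1
          rw [dif_pos e.2]
        rw [hstep1, hstep2, hstep3, hstep4, hσk]
        rfl
      · rw [dsum]
        apply Finset.sum_eq_zero
        intro e he
        rw [dif_neg]
        intro heF
        exact hif ⟨e, heF, (Finset.mem_filter.1 he).2⟩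
  · exfalso
    push_neg at hker
    have hker' : LinearMap.ker Φ = ⊥ := LinearMap.ker_eq_bot'.2 (fun σ hσ => by
      by_contra h0
      exact hker σ h0 hσ)
    have hinj : Function.Injective Φ := LinearMap.ker_eq_bot.1 hker'
    have hcard : F.card ≤ T.card := by
      have h := LinearMap.finrank_le_finrank_of_injective hinj
      rwa [Module.finrank_fintype_fun_eq_card, Module.finrank_fintype_fun_eq_card,
        Fintype.card_coe, Fintype.card_coe] at h
    have hA2 : ∀ i ∈ T, 2 ≤ (F.filter (fun e => i ∈ e)).card := by
      intro i hiT
      obtain ⟨-, htighti, e1, he1, hie1⟩ := Finset.mem_filter.1 hiT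
      exact two_frac_edges G b hz htighti he1 hie1
    have hE2 : ∀ e ∈ F, (T.filter (fun i => i ∈ e)).card ≤ 2 := by
      intro e he
      obtain ⟨a, c, hac, hrep, hadj⟩ := edge_rep G (FracSet_subset G z he)
      have hsub : T.filter (fun i => i ∈ e) ⊆ ({a, c} : Finset V) := by
        rw [← pairFilter hac, hrep]
        exact Finset.filter_subset_filter _ (Finset.subset_univ T)
      calc (T.filter (fun i => i ∈ e)).card ≤ ({a, c} : Finset V).card :=
            Finset.card_le_card hsub
        _ = 2 := Finset.card_pair hac
    have hcomm : ∑ i ∈ T, (F.filter (fun e => i ∈ e)).card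
        = ∑ e ∈ F, (T.filter (fun i => i ∈ e)).card := by
      rw [Finset.sum_congr rfl (fun i (_ : i ∈ T) => Finset.card_filter _ F),
        Finset.sum_congr rfl (fun e (_ : e ∈ F) => Finset.card_filter _ T),
        Finset.sum_comm]
    have hsum_ge : 2 * T.card ≤ ∑ i ∈ T, (F.filter (fun e => i ∈ e)).card := by
      calc 2 * T.card = ∑ _i ∈ T, 2 := by
            rw [Finset.sum_const, smul_eq_mul, mul_comm]
        _ ≤ _ := Finset.sum_le_sum hA2
    have hsum_le : ∑ e ∈ F, (T.filter (fun i => i ∈ e)).card ≤ 2 * F.card := by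
      calc ∑ e ∈ F, (T.filter (fun i => i ∈ e)).card ≤ ∑ _e ∈ F, 2 :=
            Finset.sum_le_sum hE2
        _ = 2 * F.card := by rw [Finset.sum_const, smul_eq_mul, mul_comm]
    have hTF : T.card = F.card := by omega
    have hterm : ∀ e ∈ F, (T.filter (fun i => i ∈ e)).card = 2 := by
      intro e he
      by_contra hne2
      have hlt : (T.filter (fun i => i ∈ e)).card < 2 :=
        lt_of_le_of_ne (hE2 e he) hne2
      have hstrict : ∑ e' ∈ F, (T.filter (fun i => i ∈ e')).card < ∑ _e' ∈ F, 2 :=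
        Finset.sum_lt_sum (fun e' he' => hE2 e' he') ⟨e, he, hlt⟩
      rw [Finset.sum_const, smul_eq_mul] at hstrict
      omega
    have hsurj : Function.Surjective Φ := by
      rw [← LinearMap.range_eq_top]
      apply Submodule.eq_top_of_finrank_eq
      have hrn := LinearMap.finrank_range_add_finrank_ker Φ
      rw [hker', finrank_bot, add_zero] at hrn
      rw [hrn, Module.finrank_fintype_fun_eq_card, Module.finrank_fintype_fun_eq_card,
        Fintype.card_coe, Fintype.card_coe, hTF]
    set η : {i // i ∈ T} → ℝ := fun i => if (i : V) ∈ A then 1 else -1 with hηdef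
    obtain ⟨σ, hση⟩ := hsurj η
    have hc1 : ∑ i : {i // i ∈ T}, η i * Φ σ i = (T.card : ℝ) := by
      rw [hση]
      have hsq : ∀ i : {i // i ∈ T}, η i * η i = 1 := by
        intro i
        rw [hηdef]
        by_cases hiA : (i : V) ∈ A <;> simp [hiA]
      rw [Finset.sum_congr rfl (fun i _ => hsq i), Finset.sum_const, nsmul_eq_mul,
        mul_one, Finset.card_univ, Fintype.card_coe]
    have hc2 : ∑ i : {i // i ∈ T}, η i * Φ σ i = 0 := by
      have hexp : ∀ i : {i // i ∈ T}, η i * Φ σ i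
          = ∑ e : {e // e ∈ F}, (if (i : V) ∈ (e : Sym2 V) then η i * σ e else 0) := by
        intro i
        rw [hΦapp, Finset.mul_sum]
        refine Finset.sum_congr rfl fun e _ => ?_
        split <;> simp
      rw [Finset.sum_congr rfl (fun i _ => hexp i), Finset.sum_comm]
      apply Finset.sum_eq_zero
      intro e _
      obtain ⟨a, c, hac, hrep, hadj⟩ := edge_rep G (FracSet_subset G z e.2)
      have hTfe : T.filter (fun i => i ∈ (e : Sym2 V)) = ({a, c} : Finset V) := by
        apply Finset.eq_of_subset_of_card_le
        · rw [← pairFilter hac, hrep]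
          exact Finset.filter_subset_filter _ (Finset.subset_univ T)
        · rw [Finset.card_pair hac, hterm (e : Sym2 V) e.2]
      have hconv : ∑ i : {i // i ∈ T}, (if (i : V) ∈ (e : Sym2 V) then η i * σ e else 0)
          = ∑ i ∈ T.filter (fun i => i ∈ (e : Sym2 V)),
              ((if i ∈ A then (1 : ℝ) else -1) * σ e) := by
        rw [Finset.sum_filter]
        simp only [hηdef]
        exact (Finset.sum_subtype T (fun x => Iff.rfl)
          (fun i => if i ∈ (e : Sym2 V) then (if i ∈ A then (1:ℝ) else -1) * σ e else 0)).symm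
      rw [hconv, hTfe, Finset.sum_pair hac]
      have hiff := hbip a c hadj
      by_cases haA : a ∈ A
      · have hcA : c ∉ A := hiff.1 haA
        rw [if_pos haA, if_neg hcA]
        ring
      · have hcA : c ∈ A := by
          by_contra hcA
          exact haA (hiff.2 hcA)
        rw [if_neg haA, if_pos hcA]
        ring
    rw [hc1] at hc2
    have hT0 : T.card = 0 := by exact_mod_cast hc2
    obtain ⟨e, he⟩ := hne
    have hF0 : F.card ≠ 0 := Finset.card_ne_zero_of_mem he
    omega

lemma frac_empty (A : Set V) (hbip : ∀ i j : V, G.Adj i j → (i ∈ A ↔ j ∉ A))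
    {z : Sym2 V → ℝ} (hz : z ∈ Zf G b)
    (hopt : ∀ z' ∈ Zf G b, wsum G w z' ≤ wsum G w z)
    (hm1 : ∀ z' ∈ Zf G b, wsum G w z' = wsum G w z →
      (FracSet G z).card ≤ (FracSet G z').card)
    (hm2 : ∀ z' ∈ Zf G b, wsum G w z' = wsum G w z →
      (FracSet G z').card = (FracSet G z).card →
      (SlackSet G b z).card ≤ (SlackSet G b z').card) :
    FracSet G z = ∅ := by
  by_contra hne0
  have hne : (FracSet G z).Nonempty := Finset.nonempty_of_ne_empty hne0
  obtain ⟨σ, hσne, hσsupp, hσtight⟩ := exists_kernel G b A hbip hz hne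
  obtain ⟨z', hz', hw', hcase⟩ := surgery G b w hz hσsupp hσne hσtight hopt
  rcases hcase with hlt | ⟨heq, hslt⟩
  · have := hm1 z' hz' hw'
    omega
  · have := hm2 z' hz' hw' (by rw [heq])
    omega

lemma nuf_le_bVal (hw : ∀ e ∈ G.edgeSet, 0 < w e) (A : Set V)
    (hbip : ∀ i j : V, G.Adj i j → (i ∈ A ↔ j ∉ A)) :
    nuf G b w ≤ bVal G b w univ := by
  classical
  have hZfcl : IsClosed {z : Sym2 V → ℝ | ∀ i, dsum G z i ≤ (b i : ℝ)} := by
    have hrw : {z : Sym2 V → ℝ | ∀ i, dsum G z i ≤ (b i : ℝ)} =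
        ⋂ i, {z | dsum G z i ≤ (b i : ℝ)} := by
      ext z
      simp [Set.mem_iInter]
    rw [hrw]
    exact isClosed_iInter fun i => isClosed_le (dsum_continuous G i) continuous_const
  have hZfc : IsCompact (Zf G b) := (box_compact G).inter_right hZfcl
  have hZfne : (0 : Sym2 V → ℝ) ∈ Zf G b :=
    ⟨zero_mem_box G, fun i => by simp [dsum]⟩
  obtain ⟨z0, hz0, hz0max⟩ := hZfc.exists_isMaxOn ⟨0, hZfne⟩
    (wsum_continuous G w).continuousOn
  have hnufeq : nuf G b w = wsum G w z0 := by
    apply le_antisymm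
    · rw [nuf]
      refine csSup_le ⟨wsum G w 0, 0, hZfne, rfl⟩ ?_
      rintro r ⟨z, hzz, rfl⟩
      exact (isMaxOn_iff.mp hz0max) z hzz
    · exact wsum_le_nuf G b w hw hz0
  set P1 : Set ℕ :=
    {n | ∃ z ∈ Zf G b, wsum G w z = wsum G w z0 ∧ (FracSet G z).card = n} with hP1def
  have hP1ne : P1.Nonempty := ⟨(FracSet G z0).card, z0, hz0, rfl, rfl⟩
  obtain ⟨z1, hz1, hw1, hc1⟩ := Nat.sInf_mem hP1ne
  set P2 : Set ℕ :=
    {n | ∃ z ∈ Zf G b, wsum G w z = wsum G w z0 ∧ (FracSet G z).card = sInf P1 ∧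
      (SlackSet G b z).card = n} with hP2def
  have hP2ne : P2.Nonempty := ⟨(SlackSet G b z1).card, z1, hz1, hw1, hc1, rfl⟩
  obtain ⟨z2, hz2, hw2, hc2, hs2⟩ := Nat.sInf_mem hP2ne
  have hopt : ∀ z' ∈ Zf G b, wsum G w z' ≤ wsum G w z2 := by
    intro z' hz'
    rw [hw2]
    exact (isMaxOn_iff.mp hz0max) z' hz'
  have hfrac : FracSet G z2 = ∅ := by
    apply frac_empty G b w A hbip hz2 hopt
    · intro z' hz' hwz'
      rw [hc2]
      exact Nat.sInf_le ⟨z', hz', by rw [hwz', hw2], rfl⟩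
    · intro z' hz' hwz' hcz'
      rw [hs2]
      exact Nat.sInf_le ⟨z', hz', by rw [hwz', hw2], by rw [hcz', hc2], rfl⟩
  obtain ⟨hz2B, hz2d⟩ := hz2
  rw [box_mem_iff] at hz2B
  have h01 : ∀ e ∈ G.edgeFinset, z2 e = 0 ∨ z2 e = 1 := by
    intro e he
    obtain ⟨h0, h1⟩ := hz2B.1 e he
    rcases eq_or_lt_of_le h0 with h | h
    · exact Or.inl h.symm
    rcases eq_or_lt_of_le h1 with h' | h'
    · exact Or.inr h'
    · exfalso
      have hmem : e ∈ FracSet G z2 := (mem_FracSet G).2 ⟨he, h, h'⟩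
      rw [hfrac] at hmem
      exact absurd hmem (Finset.notMem_empty e)
  set M := G.edgeFinset.filter (fun e => z2 e = 1) with hMdef
  have hMb : IsBMatching G b M := by
    constructor
    · intro e he
      exact SimpleGraph.mem_edgeFinset.1 (Finset.mem_filter.1 he).1
    · intro i
      have h01' : ∀ e ∈ G.edgeFinset.filter (fun e => i ∈ e), z2 e = 0 ∨ z2 e = 1 :=
        fun e he => h01 e (Finset.mem_filter.1 he).1
      have hsum : dsum G z2 i = (((G.edgeFinset.filter (fun e => i ∈ e)).filter
          (fun e => z2 e = 1)).card : ℝ) := sum_zero_one h01'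
      have hMfi : M.filter (fun e => i ∈ e) = (G.edgeFinset.filter (fun e => i ∈ e)).filter
          (fun e => z2 e = 1) := by
        rw [hMdef, Finset.filter_filter, Finset.filter_filter]
        apply Finset.filter_congr
        intro e _
        tauto
      have hle := hz2d i
      rw [hsum] at hle
      rw [hMfi]
      exact_mod_cast hle
  have hMw : mWeight w M = wsum G w z2 := by
    rw [mWeight, wsum, hMdef,
      ← Finset.sum_filter_add_sum_filter_not G.edgeFinset (fun e => z2 e = 1)
        (fun e => w e * z2 e)]
    have hA1 : ∑ e ∈ G.edgeFinset.filter (fun e => z2 e = 1), w e * z2 e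
        = ∑ e ∈ G.edgeFinset.filter (fun e => z2 e = 1), w e := by
      refine Finset.sum_congr rfl fun e he => ?_
      rw [(Finset.mem_filter.1 he).2, mul_one]
    have hA2 : ∑ e ∈ G.edgeFinset.filter (fun e => ¬ z2 e = 1), w e * z2 e = 0 := by
      apply Finset.sum_eq_zero
      intro e he
      obtain ⟨heE, hne1⟩ := Finset.mem_filter.1 he
      rcases h01 e heE with h0 | h1
      · rw [h0, mul_zero]
      · exact absurd h1 hne1
    rw [hA1, hA2, add_zero]
  calc nuf G b w = wsum G w z0 := hnufeq
    _ = wsum G w z2 := hw2.symm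
    _ = mWeight w M := hMw.symm
    _ ≤ bVal G b w univ := le_bVal G b w hMb (fun e _ v _ => Finset.mem_univ v)


end Aux

/-- the core of a `b`-assignment game (a `b`-matching game on a bipartite
graph) is non-empty. -/
theorem statement8 [Fintype V] [DecidableEq V] (G : SimpleGraph V) (b : V → ℕ)
    (hb : ∀ i, 0 < b i) (w : Sym2 V → ℝ) (hw : ∀ e ∈ G.edgeSet, 0 < w e)
    (A : Set V) (hbip : ∀ i j : V, G.Adj i j → (i ∈ A ↔ j ∉ A)) :
    ∃ x : V → ℝ, InCore (bVal G b w) x := by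
  obtain ⟨y, hy0, hyd⟩ := exists_dual' G b w hw
  have hint := nuf_le_bVal G b w hw A hbip
  set x : V → ℝ :=
    fun i => (b i : ℝ) * y i + ∑ e ∈ G.edgeFinset.filter (fun e => pick e = i), mu w y e
    with hxdef
  have key : ∀ S : Finset V, bVal G b w S ≤ ∑ i ∈ S, x i := by
    intro S
    rw [hxdef, hval_split]
    exact bVal_le_weak G b w y hy0 S
  have htot : ∑ i, x i = bVal G b w univ := by
    refine le_antisymm ?_ (key univ)
    have h1 : ∑ i, x i = hval G b w y := by
      rw [hxdef, hval_split, hval]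
      congr 2
      apply Finset.filter_true_of_mem
      intro e _
      exact Finset.mem_univ _
    rw [h1]
    exact hyd.trans hint
  exact ⟨x, htot, key⟩


end MatchingGames
end

section
/- Let (G,b,w) be an instance of Stable Fixtures with Payments, where G=(V,E) is an arbitrary finite simple graph, b assigns positive integer capacities to the vertices, and w assigns positive weights to the edges. If (M,p) is a stable solution for (G,b,w), then M is a maximum weight b-matching of G and the total pay-off vector p^t is a core allocation of the b-matching game defined on (G,b,w). -/
open scoped Classical
open Finset

namespace MatchingGames

variable {V : Type*}

section Aux

variable [Fintype V] [DecidableEq V] {G : SimpleGraph V} {b : V → ℕ}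
  {w : Sym2 V → ℝ} {M : Finset (Sym2 V)} {p : V → V → ℝ}

lemma p_nonneg (hsol : IsBSolution G b w M p) (i j : V) : 0 ≤ p i j := by
  by_cases h : s(i, j) ∈ M
  · exact (hsol.2.1 i j h).1
  · rw [hsol.2.2 i j h]

lemma sum_single_edge (q : V → V → ℝ) (a c : V) (hac : a ≠ c) :
    (∑ i, ∑ j ∈ Finset.univ.filter (fun j => s(i, j) = s(a, c)), q i j) = q a c + q c a := by
  have hz : ∀ i ∈ Finset.univ (α := V), i ∉ ({a, c} : Finset V) →
      (∑ j ∈ Finset.univ.filter (fun j => s(i, j) = s(a, c)), q i j) = 0 := by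
    intro i _ hi
    have : Finset.univ.filter (fun j => s(i, j) = s(a, c)) = ∅ := by
      ext j
      simp only [mem_filter, mem_univ, true_and, Sym2.eq_iff, Finset.notMem_empty, iff_false]
      rintro (⟨rfl, rfl⟩ | ⟨rfl, rfl⟩) <;> simp [Finset.mem_insert] at hi
    rw [this, Finset.sum_empty]
  rw [← Finset.sum_subset (Finset.subset_univ ({a, c} : Finset V)) hz,
    Finset.sum_pair hac]
  have h1 : Finset.univ.filter (fun j => s(a, j) = s(a, c)) = {c} := by
    ext j
    simp only [mem_filter, mem_univ, true_and, Sym2.eq_iff, Finset.mem_singleton]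
    constructor
    · rintro (⟨-, rfl⟩ | ⟨rfl, rfl⟩) <;> tauto
    · rintro rfl; tauto
  have h2 : Finset.univ.filter (fun j => s(c, j) = s(a, c)) = {a} := by
    ext j
    simp only [mem_filter, mem_univ, true_and, Sym2.eq_iff, Finset.mem_singleton]
    constructor
    · rintro (⟨rfl, rfl⟩ | ⟨-, rfl⟩) <;> tauto
    · rintro rfl; tauto
  rw [h1, h2, Finset.sum_singleton, Finset.sum_singleton]

lemma sum_pairs (q : V → V → ℝ) (N : Finset (Sym2 V))
    (hN : ∀ e ∈ N, ¬ e.IsDiag) :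
    (∑ i, ∑ j ∈ Finset.univ.filter (fun j => s(i, j) ∈ N), q i j)
      = ∑ e ∈ N, Sym2.lift ⟨fun a c => q a c + q c a, fun a c => add_comm _ _⟩ e := by
  induction N using Finset.induction with
  | empty => simp
  | @insert e N he ih =>
    have hNe : ∀ f ∈ N, ¬ f.IsDiag := fun f hf => hN f (Finset.mem_insert_of_mem hf)
    have hed : ¬ e.IsDiag := hN e (Finset.mem_insert_self e N)
    have hsplit : ∀ i : V,
        Finset.univ.filter (fun j => s(i, j) ∈ insert e N)
          = Finset.univ.filter (fun j => s(i, j) = e) ∪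
            Finset.univ.filter (fun j => s(i, j) ∈ N) := by
      intro i; ext j; simp [Finset.mem_insert]
    have hdisj : ∀ i : V,
        Disjoint (Finset.univ.filter (fun j => s(i, j) = e))
          (Finset.univ.filter (fun j => s(i, j) ∈ N)) := by
      intro i
      rw [Finset.disjoint_left]
      intro j hj1 hj2
      simp only [mem_filter, mem_univ, true_and] at hj1 hj2
      exact he (hj1 ▸ hj2)
    calc (∑ i, ∑ j ∈ Finset.univ.filter (fun j => s(i, j) ∈ insert e N), q i j)
        = ∑ i, ((∑ j ∈ Finset.univ.filter (fun j => s(i, j) = e), q i j)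
            + ∑ j ∈ Finset.univ.filter (fun j => s(i, j) ∈ N), q i j) := by
          refine Finset.sum_congr rfl fun i _ => ?_
          rw [hsplit i, Finset.sum_union (hdisj i)]
      _ = (∑ i, ∑ j ∈ Finset.univ.filter (fun j => s(i, j) = e), q i j)
            + ∑ i, ∑ j ∈ Finset.univ.filter (fun j => s(i, j) ∈ N), q i j := by
          rw [Finset.sum_add_distrib]
      _ = _ := by
          rw [ih hNe, Finset.sum_insert he]
          congr 1
          induction e using Sym2.inductionOn with
          | hf a c =>
            have hac : a ≠ c := by simpa [Sym2.isDiag_iff_proj_eq] using hed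
            rw [sum_single_edge q a c hac, Sym2.lift_mk]

/-- number of `N`-neighbours via a finset of edges is at most the number of incident edges -/
lemma card_nbrs_le (N : Finset (Sym2 V)) (i : V) :
    (Finset.univ.filter (fun j => s(i, j) ∈ N)).card ≤ (N.filter (fun e => i ∈ e)).card := by
  apply Finset.card_le_card_of_injOn (fun j => s(i, j))
  · intro j hj
    simp only [mem_filter, mem_univ, true_and, Finset.mem_coe] at hj ⊢
    exact ⟨hj, Sym2.mem_mk_left i j⟩
  · intro j _ j' _ h
    exact Sym2.congr_right.mp h

/-- key per-vertex inequality -/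
lemma vertex_bound (hsol : IsBSolution G b w M p) (i : V) (N : Finset V)
    (hNcard : N.card ≤ b i) :
    (∑ j ∈ N, (if s(i, j) ∈ M then p i j else utility G b p i)) ≤ totalPayoff p i := by
  set A : Finset V := Finset.univ.filter (fun j => s(i, j) ∈ M) with hA
  have hAcard : A.card ≤ b i := le_trans (card_nbrs_le M i) (hsol.1.2 i)
  set u : ℝ := utility G b p i with hu
  -- split the sum
  rw [Finset.sum_ite, Finset.sum_const, nsmul_eq_mul]
  have hsub : N.filter (fun j => s(i, j) ∈ M) ⊆ A := by
    intro j hj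
    simp only [mem_filter] at hj
    simp only [hA, mem_filter, mem_univ, true_and]
    exact hj.2
  have htotal : totalPayoff p i = ∑ j ∈ A, p i j := by
    rw [totalPayoff]
    refine (Finset.sum_subset (Finset.subset_univ A) ?_).symm
    intro j _ hj
    simp only [hA, mem_filter, mem_univ, true_and] at hj
    exact hsol.2.2 i j hj
  rw [htotal, ← Finset.sum_sdiff hsub]
  have hk : (N.filter (fun j => ¬ s(i, j) ∈ M)).card + (N.filter (fun j => s(i, j) ∈ M)).card
      ≤ b i := by
    rw [add_comm, Finset.card_filter_add_card_filter_not]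
    exact hNcard
  -- suffices: k * u ≤ ∑ over A \ filter
  have key : ((N.filter (fun j => ¬ s(i, j) ∈ M)).card : ℝ) * u
      ≤ ∑ j ∈ A \ N.filter (fun j => s(i, j) ∈ M), p i j := by
    rcases le_or_gt u 0 with hu0 | hu0
    · refine le_trans (mul_nonpos_of_nonneg_of_nonpos (by positivity) hu0) ?_
      exact Finset.sum_nonneg fun j _ => p_nonneg hsol i j
    · -- u > 0 : then A has exactly b i elements and u ≤ p i j on A
      obtain ⟨t, ht, htpos⟩ : ∃ t, (b i ≤ (Finset.univ.filter
          (fun j : V => G.Adj i j ∧ t ≤ p i j)).card) ∧ 0 < t := by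
        by_contra hcon
        push_neg at hcon
        have : u ≤ 0 := Real.sSup_le (fun t ht => hcon t ht) le_rfl
        linarith
      have hFA : ∀ t' : ℝ, 0 < t' →
          Finset.univ.filter (fun j : V => G.Adj i j ∧ t' ≤ p i j) ⊆ A := by
        intro t' ht' j hj
        simp only [mem_filter, mem_univ, true_and] at hj
        simp only [hA, mem_filter, mem_univ, true_and]
        by_contra hjM
        have := hsol.2.2 i j hjM
        linarith [hj.2]
      have hAb : A.card = b i :=
        le_antisymm hAcard (le_trans ht (Finset.card_le_card (hFA t htpos)))
      have hup : ∀ j ∈ A, u ≤ p i j := by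
        intro j hj
        have hpj : 0 ≤ p i j := p_nonneg hsol i j
        refine Real.sSup_le ?_ hpj
        intro t' ht'
        rcases le_or_gt t' 0 with h | h
        · linarith
        · have hsubF := hFA t' h
          have : Finset.univ.filter (fun j : V => G.Adj i j ∧ t' ≤ p i j) = A :=
            Finset.eq_of_subset_of_card_le hsubF (by rw [hAb]; exact ht')
          rw [← this] at hj
          simp only [mem_filter, mem_univ, true_and] at hj
          exact hj.2
      have hcard2 : (N.filter (fun j => ¬ s(i, j) ∈ M)).card
          ≤ (A \ N.filter (fun j => s(i, j) ∈ M)).card := by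
        rw [Finset.card_sdiff_of_subset hsub, hAb]
        omega
      calc ((N.filter (fun j => ¬ s(i, j) ∈ M)).card : ℝ) * u
          ≤ ((A \ N.filter (fun j => s(i, j) ∈ M)).card : ℝ) * u := by
            apply mul_le_mul_of_nonneg_right _ (le_of_lt hu0)
            exact_mod_cast hcard2
        _ ≤ ∑ j ∈ A \ N.filter (fun j => s(i, j) ∈ M), p i j := by
            rw [← nsmul_eq_mul]
            refine Finset.card_nsmul_le_sum _ _ _ fun j hj => ?_
            exact hup j (Finset.mem_sdiff.mp hj).1
  linarith [key]

/-- the coalition bound -/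
lemma coalition_bound (hstab : IsBStable G b w M p) (S : Finset V)
    (M' : Finset (Sym2 V)) (hM' : IsBMatching G b M') (hS : EdgesIn S M') :
    mWeight w M' ≤ ∑ i ∈ S, totalPayoff p i := by
  classical
  set c : V → V → ℝ := fun i j => if s(i, j) ∈ M then p i j else utility G b p i with hc
  have hsym : ∀ a d : V, c a d + c d a = c d a + c a d := fun a d => add_comm _ _
  have hdiag : ∀ e ∈ M', ¬ e.IsDiag := by
    intro e he
    exact (SimpleGraph.not_isDiag_of_mem_edgeSet G (hM'.1 e he))
  have step1 : mWeight w M' ≤ ∑ e ∈ M',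
      Sym2.lift ⟨fun a d => c a d + c d a, hsym⟩ e := by
    refine Finset.sum_le_sum fun e he => ?_
    induction e using Sym2.inductionOn with
    | hf a d =>
      have hadj : G.Adj a d := (SimpleGraph.mem_edgeSet G).mp (hM'.1 _ he)
      rw [Sym2.lift_mk]
      by_cases hm : s(a, d) ∈ M
      · have hm' : s(d, a) ∈ M := by rwa [Sym2.eq_swap]
        simp only [hc, if_pos hm, if_pos hm']
        exact le_of_eq ((hstab.1.2.1 a d hm).2.2).symm
      · have hm' : s(d, a) ∉ M := by rwa [Sym2.eq_swap]
        simp only [hc, if_neg hm, if_neg hm']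
        exact hstab.2 a d hadj hm
  have step2 : (∑ e ∈ M', Sym2.lift ⟨fun a d => c a d + c d a, hsym⟩ e)
      = ∑ i, ∑ j ∈ Finset.univ.filter (fun j => s(i, j) ∈ M'), c i j :=
    (sum_pairs c M' hdiag).symm
  have step3 : (∑ i, ∑ j ∈ Finset.univ.filter (fun j => s(i, j) ∈ M'), c i j)
      = ∑ i ∈ S, ∑ j ∈ Finset.univ.filter (fun j => s(i, j) ∈ M'), c i j := by
    refine (Finset.sum_subset (Finset.subset_univ S) ?_).symm
    intro i _ hiS
    have : Finset.univ.filter (fun j => s(i, j) ∈ M') = ∅ := by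
      ext j
      simp only [mem_filter, mem_univ, true_and, Finset.notMem_empty, iff_false]
      intro hj
      exact hiS (hS _ hj i (Sym2.mem_mk_left i j))
    rw [this, Finset.sum_empty]
  have step4 : ∀ i ∈ S, (∑ j ∈ Finset.univ.filter (fun j => s(i, j) ∈ M'), c i j)
      ≤ totalPayoff p i := by
    intro i _
    exact vertex_bound hstab.1 i _ (le_trans (card_nbrs_le M' i) (hM'.2 i))
  calc mWeight w M' ≤ _ := step1
    _ = _ := step2
    _ = _ := step3
    _ ≤ _ := Finset.sum_le_sum step4

lemma sum_total (hsol : IsBSolution G b w M p) :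
    (∑ i, totalPayoff p i) = mWeight w M := by
  have hdiag : ∀ e ∈ M, ¬ e.IsDiag := fun e he =>
    SimpleGraph.not_isDiag_of_mem_edgeSet G (hsol.1.1 e he)
  have h1 : (∑ i, totalPayoff p i)
      = ∑ i, ∑ j ∈ Finset.univ.filter (fun j => s(i, j) ∈ M), p i j := by
    refine Finset.sum_congr rfl fun i _ => ?_
    rw [totalPayoff]
    refine (Finset.sum_subset (Finset.subset_univ _) ?_).symm
    intro j _ hj
    simp only [mem_filter, mem_univ, true_and] at hj
    exact hsol.2.2 i j hj
  rw [h1, sum_pairs p M hdiag]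
  refine Finset.sum_congr rfl fun e he => ?_
  induction e using Sym2.inductionOn with
  | hf a d =>
    rw [Sym2.lift_mk]
    exact (hsol.2.1 a d he).2.2

end Aux

/-- if `(M,p)` is a stable solution for an instance `(G,b,w)` of Stable
Fixtures with Payments, then `M` is a maximum weight `b`-matching of `G` and the total
pay-off vector `p^t` is a core allocation of the `b`-matching game on `(G,b,w)`. -/
theorem statement9 [Fintype V] [DecidableEq V] (G : SimpleGraph V) (b : V → ℕ)
    (hb : ∀ i, 0 < b i) (w : Sym2 V → ℝ) (hw : ∀ e ∈ G.edgeSet, 0 < w e)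
    (M : Finset (Sym2 V)) (p : V → V → ℝ) (hstab : IsBStable G b w M p) :
    mWeight w M = bVal G b w Finset.univ ∧ InCore (bVal G b w) (totalPayoff p) := by
  have hsol := hstab.1
  have hX : (∑ i, totalPayoff p i) = mWeight w M := sum_total hsol
  have hnonneg : ∀ S : Finset V, 0 ≤ ∑ i ∈ S, totalPayoff p i := by
    intro S
    refine Finset.sum_nonneg fun i _ => Finset.sum_nonneg fun j _ => p_nonneg hsol i j
  have hub : ∀ S : Finset V, ∀ t ∈ {t | ∃ M' : Finset (Sym2 V),
      IsBMatching G b M' ∧ EdgesIn S M' ∧ t = mWeight w M'}, t ≤ ∑ i ∈ S, totalPayoff p i := by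
    rintro S t ⟨M', hM', hS, rfl⟩
    exact coalition_bound hstab S M' hM' hS
  have hcore : ∀ S : Finset V, bVal G b w S ≤ ∑ i ∈ S, totalPayoff p i := by
    intro S
    exact Real.sSup_le (hub S) (hnonneg S)
  have hmem : mWeight w M ∈ {t | ∃ M' : Finset (Sym2 V),
      IsBMatching G b M' ∧ EdgesIn Finset.univ M' ∧ t = mWeight w M'} :=
    ⟨M, hsol.1, fun e _ v _ => Finset.mem_univ v, rfl⟩
  have hle : mWeight w M ≤ bVal G b w Finset.univ :=
    le_csSup ⟨∑ i, totalPayoff p i, fun t ht => hub Finset.univ t ht⟩ hmem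
  have hge : bVal G b w Finset.univ ≤ mWeight w M := by
    rw [← hX]; exact hcore Finset.univ
  have heq : mWeight w M = bVal G b w Finset.univ := le_antisymm hle hge
  exact ⟨heq, by rw [hX, heq], hcore⟩


end MatchingGames
end

section
/- There exists a b-matching game with capacities b ≤ 2 and unit edge weights whose core is non-empty but whose underlying instance of Stable Fixtures with Payments admits no stable solution. Concretely, let G be the graph on vertex set {1,2,3,4} with edge set {12, 13, 14, 23, 34}, capacities b(1)=b(2)=b(3)=2 and b(4)=1, and w ≡ 1. Then for the b-matching game (N,v) on (G,b,w): v(N) = 3, the vector (1,1,1,0) is a core allocation, and the maximum weight of a half-b-matching in G is 7/2 > 3, so (G,b,w) has no stable solution. -/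
open scoped Classical
open Finset

namespace MatchingGames

variable {V : Type*}

/-- `f` is a fractional `b`-matching of `G`: it is supported on the edges of `G`, takes
values in `[0,1]`, and the values on the edges at any vertex `i` sum to at most `b i`. -/
def IsFractionalBMatching [Fintype V] [DecidableEq V] (G : SimpleGraph V) (b : V → ℕ)
    (f : Sym2 V → ℝ) : Prop :=
  (∀ e, e ∉ G.edgeSet → f e = 0) ∧ (∀ e, 0 ≤ f e ∧ f e ≤ 1) ∧
    ∀ i : V, (∑ e ∈ Finset.univ.filter (fun e : Sym2 V => i ∈ e), f e) ≤ (b i : ℝ)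

/-- a half-`b`-matching is a fractional `b`-matching taking values in `{0, 1/2, 1}`. -/
def IsHalfBMatching [Fintype V] [DecidableEq V] (G : SimpleGraph V) (b : V → ℕ)
    (f : Sym2 V → ℝ) : Prop :=
  IsFractionalBMatching G b f ∧ ∀ e, f e = 0 ∨ f e = 1 / 2 ∨ f e = 1

/-- the weight `w(f) = Σ_e w(e) f(e)` of a fractional `b`-matching `f`. -/
noncomputable def fWeight [Fintype V] [DecidableEq V] (w f : Sym2 V → ℝ) : ℝ :=
  ∑ e : Sym2 V, w e * f e

/-- the graph on vertices `{1,2,3,4}` (here `0,1,2,3`) with edges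
`{12, 13, 14, 23, 34}`. -/
def G11 : SimpleGraph (Fin 4) :=
  SimpleGraph.fromRel (fun i j =>
    s(i, j) ∈ ({s(0, 1), s(0, 2), s(0, 3), s(1, 2), s(2, 3)} : Finset (Sym2 (Fin 4))))

/-- capacities `b(1) = b(2) = b(3) = 2` and `b(4) = 1`. -/
def b11 : Fin 4 → ℕ := ![2, 2, 2, 1]


set_option maxRecDepth 100000 in
lemma G11_helper : True := trivial

/-- the edge set of `G11` as an explicit finset. -/
def E5 : Finset (Sym2 (Fin 4)) := {s(0,1), s(0,2), s(0,3), s(1,2), s(2,3)}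

set_option maxRecDepth 100000

lemma hAdj : ∀ a c : Fin 4, G11.Adj a c ↔ s(a,c) ∈ E5 := by
  intro a c
  rw [G11, SimpleGraph.fromRel_adj]
  revert a c; decide

lemma hedge : ∀ e : Sym2 (Fin 4), e ∈ G11.edgeSet ↔ e ∈ E5 := by
  intro e
  induction e using Sym2.ind with
  | _ x y => rw [SimpleGraph.mem_edgeSet, hAdj]

lemma sum_sym2 (g : Sym2 (Fin 4) → ℝ) : ∑ e : Sym2 (Fin 4), g e =
    g s(0,0) + g s(0,1) + g s(0,2) + g s(0,3) + g s(1,1) + g s(1,2) + g s(1,3)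
      + g s(2,2) + g s(2,3) + g s(3,3) := by
  rw [show (univ : Finset (Sym2 (Fin 4))) =
    {s(0,0), s(0,1), s(0,2), s(0,3), s(1,1), s(1,2), s(1,3), s(2,2), s(2,3), s(3,3)} from by decide]
  rw [Finset.sum_insert (by decide), Finset.sum_insert (by decide), Finset.sum_insert (by decide),
    Finset.sum_insert (by decide), Finset.sum_insert (by decide), Finset.sum_insert (by decide),
    Finset.sum_insert (by decide), Finset.sum_insert (by decide), Finset.sum_insert (by decide),
    Finset.sum_singleton]
  ring

lemma double_count (S : Finset (Fin 4)) (M : Finset (Sym2 (Fin 4)))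
    (hE : ∀ e ∈ M, e ∈ G11.edgeSet)
    (hIn : ∀ e ∈ M, ∀ v : Fin 4, v ∈ e → v ∈ S)
    (hcap : ∀ i, (M.filter (fun e => i ∈ e)).card ≤ b11 i) :
    2 * M.card ≤ ∑ i ∈ S, b11 i := by
  have h2 : ∀ e ∈ M, (S.filter (fun i => i ∈ e)).card = 2 := by
    intro e he
    induction e using Sym2.ind with
    | _ a b =>
      have hab : a ≠ b :=
        (by decide : ∀ x y : Fin 4, s(x,y) ∈ E5 → x ≠ y) a b ((hedge _).mp (hE _ he))
      have : S.filter (fun i => i ∈ s(a,b)) = {a, b} := by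
        ext i
        simp only [Finset.mem_filter, Sym2.mem_iff, Finset.mem_insert, Finset.mem_singleton]
        constructor
        · rintro ⟨-, h⟩; exact h
        · rintro (rfl | rfl)
          · exact ⟨hIn _ he _ (by simp), Or.inl rfl⟩
          · exact ⟨hIn _ he _ (by simp), Or.inr rfl⟩
      rw [this, Finset.card_pair hab]
  calc 2 * M.card = ∑ e ∈ M, (S.filter (fun i => i ∈ e)).card := by
        rw [Finset.sum_congr rfl h2, Finset.sum_const, smul_eq_mul, mul_comm]
    _ = ∑ i ∈ S, (M.filter (fun e => i ∈ e)).card := by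
        simp only [Finset.card_filter]
        rw [Finset.sum_comm]
    _ ≤ ∑ i ∈ S, b11 i := Finset.sum_le_sum (fun i _ => hcap i)

lemma card_bound (S : Finset (Fin 4)) (M : Finset (Sym2 (Fin 4)))
    (hE : ∀ e ∈ M, e ∈ G11.edgeSet)
    (hIn : ∀ e ∈ M, ∀ v : Fin 4, v ∈ e → v ∈ S)
    (hcap : ∀ i, (M.filter (fun e => i ∈ e)).card ≤ b11 i) :
    M.card ≤ ∑ i ∈ S, (![1,1,1,0] : Fin 4 → ℕ) i := by
  have h1 := double_count S M hE hIn hcap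
  have h3 : ∑ i ∈ S, b11 i ≤ 2 * (∑ i ∈ S, (![1,1,1,0] : Fin 4 → ℕ) i) + 1 := by
    have hb : ∀ i ∈ S, b11 i ≤ 2 * (![1,1,1,0] : Fin 4 → ℕ) i + (if i = 3 then 1 else 0) := by
      intro i _; fin_cases i <;> simp [b11]
    calc ∑ i ∈ S, b11 i
        ≤ ∑ i ∈ S, (2 * (![1,1,1,0] : Fin 4 → ℕ) i + (if i = 3 then 1 else 0)) :=
          Finset.sum_le_sum hb
      _ = 2 * (∑ i ∈ S, (![1,1,1,0] : Fin 4 → ℕ) i) + ∑ i ∈ S, (if i = 3 then 1 else 0) := by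
          rw [Finset.sum_add_distrib, Finset.mul_sum]
      _ ≤ _ := by
          gcongr
          rw [Finset.sum_ite_eq' S (3 : Fin 4) (fun _ => 1)]
          split <;> omega
  omega

lemma cast_sum (S : Finset (Fin 4)) :
    ∑ i ∈ S, (![1,1,1,0] : Fin 4 → ℝ) i = ((∑ i ∈ S, (![1,1,1,0] : Fin 4 → ℕ) i : ℕ) : ℝ) := by
  rw [Nat.cast_sum]
  exact Finset.sum_congr rfl (fun i _ => by fin_cases i <;> simp)

lemma mWeight_one (M : Finset (Sym2 (Fin 4))) :
    mWeight (fun _ => (1 : ℝ)) M = (M.card : ℝ) := by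
  simp [mWeight]

lemma t_le (S : Finset (Fin 4)) : ∀ t ∈ {t | ∃ M : Finset (Sym2 (Fin 4)),
    IsBMatching G11 b11 M ∧ EdgesIn S M ∧ t = mWeight (fun _ => (1 : ℝ)) M},
    t ≤ ∑ i ∈ S, (![1,1,1,0] : Fin 4 → ℝ) i := by
  rintro t ⟨M, ⟨hE, hcap⟩, hIn, rfl⟩
  rw [mWeight_one, cast_sum]
  exact_mod_cast card_bound S M hE hIn hcap

lemma bVal_le_s11 (S : Finset (Fin 4)) :
    bVal G11 b11 (fun _ => (1 : ℝ)) S ≤ ∑ i ∈ S, (![1,1,1,0] : Fin 4 → ℝ) i := by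
  apply Real.sSup_le (t_le S)
  rw [cast_sum]; positivity

lemma bVal_univ : bVal G11 b11 (fun _ => (1 : ℝ)) Finset.univ = 3 := by
  have hsum : ∑ i ∈ (univ : Finset (Fin 4)), (![1,1,1,0] : Fin 4 → ℝ) i = 3 := by
    norm_num [Fin.sum_univ_four, Matrix.cons_val_two, Matrix.cons_val_three]
  apply le_antisymm
  · calc bVal G11 b11 (fun _ => (1 : ℝ)) Finset.univ
        ≤ ∑ i ∈ (univ : Finset (Fin 4)), (![1,1,1,0] : Fin 4 → ℝ) i := bVal_le_s11 univ
      _ = 3 := hsum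
  · apply le_csSup ⟨3, by rw [← hsum] at *; exact t_le univ⟩
    refine ⟨({s(0,1), s(0,2), s(1,2)} : Finset (Sym2 (Fin 4))), ⟨?_, ?_⟩, ?_, ?_⟩
    · intro e he
      rw [hedge]
      exact (by decide :
        ∀ e ∈ ({s(0,1), s(0,2), s(1,2)} : Finset (Sym2 (Fin 4))), e ∈ E5) e he
    · decide
    · intro e _ v _; exact Finset.mem_univ v
    · rw [mWeight_one,
        (by decide : ({s(0,1), s(0,2), s(1,2)} : Finset (Sym2 (Fin 4))).card = 3)]
      norm_num


/-- the optimal half-`b`-matching. -/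
noncomputable def f0 : Sym2 (Fin 4) → ℝ := fun e =>
  if e = s(0,1) ∨ e = s(1,2) then 1
  else if e = s(0,2) ∨ e = s(0,3) ∨ e = s(2,3) then 1/2 else 0

lemma f0v01 : f0 s(0,1) = 1 := by rw [f0, if_pos (by decide)]
lemma f0v12 : f0 s(1,2) = 1 := by rw [f0, if_pos (by decide)]
lemma f0v02 : f0 s(0,2) = 1/2 := by rw [f0, if_neg (by decide), if_pos (by decide)]
lemma f0v03 : f0 s(0,3) = 1/2 := by rw [f0, if_neg (by decide), if_pos (by decide)]
lemma f0v23 : f0 s(2,3) = 1/2 := by rw [f0, if_neg (by decide), if_pos (by decide)]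
lemma f0v00 : f0 s(0,0) = 0 := by rw [f0, if_neg (by decide), if_neg (by decide)]
lemma f0v11 : f0 s(1,1) = 0 := by rw [f0, if_neg (by decide), if_neg (by decide)]
lemma f0v22 : f0 s(2,2) = 0 := by rw [f0, if_neg (by decide), if_neg (by decide)]
lemma f0v33 : f0 s(3,3) = 0 := by rw [f0, if_neg (by decide), if_neg (by decide)]
lemma f0v13 : f0 s(1,3) = 0 := by rw [f0, if_neg (by decide), if_neg (by decide)]

lemma filt0 : (univ.filter (fun e : Sym2 (Fin 4) => (0:Fin 4) ∈ e))
    = {s(0,0), s(0,1), s(0,2), s(0,3)} := by decide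
lemma filt1 : (univ.filter (fun e : Sym2 (Fin 4) => (1:Fin 4) ∈ e))
    = {s(0,1), s(1,1), s(1,2), s(1,3)} := by decide
lemma filt2 : (univ.filter (fun e : Sym2 (Fin 4) => (2:Fin 4) ∈ e))
    = {s(0,2), s(1,2), s(2,2), s(2,3)} := by decide
lemma filt3 : (univ.filter (fun e : Sym2 (Fin 4) => (3:Fin 4) ∈ e))
    = {s(0,3), s(1,3), s(2,3), s(3,3)} := by decide

lemma sum4 (g : Sym2 (Fin 4) → ℝ) (a b c d : Sym2 (Fin 4)) (hab : a ≠ b) (hac : a ≠ c)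
    (had : a ≠ d) (hbc : b ≠ c) (hbd : b ≠ d) (hcd : c ≠ d) :
    ∑ e ∈ ({a, b, c, d} : Finset (Sym2 (Fin 4))), g e = g a + g b + g c + g d := by
  rw [Finset.sum_insert (by simp [hab, hac, had]), Finset.sum_insert (by simp [hbc, hbd]),
    Finset.sum_insert (by simp [hcd]), Finset.sum_singleton]
  ring

lemma vsum0 (f : Sym2 (Fin 4) → ℝ) :
    ∑ e ∈ univ.filter (fun e : Sym2 (Fin 4) => (0:Fin 4) ∈ e), f e
      = f s(0,0) + f s(0,1) + f s(0,2) + f s(0,3) := by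
  rw [filt0, sum4 f _ _ _ _ (by decide) (by decide) (by decide) (by decide) (by decide) (by decide)]
lemma vsum1 (f : Sym2 (Fin 4) → ℝ) :
    ∑ e ∈ univ.filter (fun e : Sym2 (Fin 4) => (1:Fin 4) ∈ e), f e
      = f s(0,1) + f s(1,1) + f s(1,2) + f s(1,3) := by
  rw [filt1, sum4 f _ _ _ _ (by decide) (by decide) (by decide) (by decide) (by decide) (by decide)]
lemma vsum2 (f : Sym2 (Fin 4) → ℝ) :
    ∑ e ∈ univ.filter (fun e : Sym2 (Fin 4) => (2:Fin 4) ∈ e), f e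
      = f s(0,2) + f s(1,2) + f s(2,2) + f s(2,3) := by
  rw [filt2, sum4 f _ _ _ _ (by decide) (by decide) (by decide) (by decide) (by decide) (by decide)]
lemma vsum3 (f : Sym2 (Fin 4) → ℝ) :
    ∑ e ∈ univ.filter (fun e : Sym2 (Fin 4) => (3:Fin 4) ∈ e), f e
      = f s(0,3) + f s(1,3) + f s(2,3) + f s(3,3) := by
  rw [filt3, sum4 f _ _ _ _ (by decide) (by decide) (by decide) (by decide) (by decide) (by decide)]

lemma half_le : ∀ t ∈ {t | ∃ f : Sym2 (Fin 4) → ℝ,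
    IsHalfBMatching G11 b11 f ∧ t = fWeight (fun _ => (1 : ℝ)) f}, t ≤ 7/2 := by
  rintro t ⟨f, ⟨⟨hzero, hrange, hvert⟩, -⟩, rfl⟩
  have h00 : f s(0,0) = 0 := hzero _ (by rw [hedge]; decide)
  have h11 : f s(1,1) = 0 := hzero _ (by rw [hedge]; decide)
  have h22 : f s(2,2) = 0 := hzero _ (by rw [hedge]; decide)
  have h33 : f s(3,3) = 0 := hzero _ (by rw [hedge]; decide)
  have h13 : f s(1,3) = 0 := hzero _ (by rw [hedge]; decide)
  have v0 := hvert 0; have v1 := hvert 1; have v2 := hvert 2; have v3 := hvert 3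
  rw [vsum0 f] at v0; rw [vsum1 f] at v1; rw [vsum2 f] at v2; rw [vsum3 f] at v3
  norm_num [b11, Matrix.cons_val_two, Matrix.cons_val_three] at v0 v1 v2 v3
  rw [fWeight, sum_sym2]
  simp only [one_mul]
  linarith [hrange s(0,1), hrange s(0,2), hrange s(0,3), hrange s(1,2), hrange s(2,3)]

lemma f0_vert : ∀ i : Fin 4,
    ∑ e ∈ univ.filter (fun e : Sym2 (Fin 4) => i ∈ e), f0 e ≤ (b11 i : ℝ) := by
  have g0 : ∑ e ∈ univ.filter (fun e : Sym2 (Fin 4) => (0:Fin 4) ∈ e), f0 e ≤ (b11 0 : ℝ) := by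
    rw [vsum0, f0v00, f0v01, f0v02, f0v03]; norm_num [b11]
  have g1 : ∑ e ∈ univ.filter (fun e : Sym2 (Fin 4) => (1:Fin 4) ∈ e), f0 e ≤ (b11 1 : ℝ) := by
    rw [vsum1, f0v01, f0v11, f0v12, f0v13]; norm_num [b11]
  have g2 : ∑ e ∈ univ.filter (fun e : Sym2 (Fin 4) => (2:Fin 4) ∈ e), f0 e ≤ (b11 2 : ℝ) := by
    rw [vsum2, f0v02, f0v12, f0v22, f0v23]; norm_num [b11, Matrix.cons_val_two]
  have g3 : ∑ e ∈ univ.filter (fun e : Sym2 (Fin 4) => (3:Fin 4) ∈ e), f0 e ≤ (b11 3 : ℝ) := by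
    rw [vsum3, f0v03, f0v13, f0v23, f0v33]; norm_num [b11, Matrix.cons_val_three]
  intro i; fin_cases i
  exacts [g0, g1, g2, g3]

lemma half_mem : (7/2 : ℝ) ∈ {t | ∃ f : Sym2 (Fin 4) → ℝ,
    IsHalfBMatching G11 b11 f ∧ t = fWeight (fun _ => (1 : ℝ)) f} := by
  refine ⟨f0, ⟨⟨?_, ?_, f0_vert⟩, ?_⟩, ?_⟩
  · intro e he
    rw [hedge] at he
    have h1 : e ≠ s(0,1) := by rintro rfl; exact he (by decide)
    have h2 : e ≠ s(1,2) := by rintro rfl; exact he (by decide)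
    have h3 : e ≠ s(0,2) := by rintro rfl; exact he (by decide)
    have h4 : e ≠ s(0,3) := by rintro rfl; exact he (by decide)
    have h5 : e ≠ s(2,3) := by rintro rfl; exact he (by decide)
    rw [f0, if_neg (by tauto), if_neg (by tauto)]
  · intro e; rw [f0]; split_ifs <;> norm_num
  · intro e; rw [f0]; split_ifs <;> norm_num
  · rw [fWeight, sum_sym2]
    simp only [one_mul, f0v00, f0v01, f0v02, f0v03, f0v11, f0v12, f0v13, f0v22, f0v23, f0v33]
    norm_num


lemma deg_bound {M : Finset (Sym2 (Fin 4))} (hsub : ∀ e ∈ M, e ∈ E5) (i : Fin 4)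
    (D : Finset (Sym2 (Fin 4))) (hD : ∀ e ∈ D, e ∉ M) :
    (M.filter (fun e => i ∈ e)).card ≤ ((E5 \ D).filter (fun e => i ∈ e)).card := by
  apply Finset.card_le_card
  intro e he
  rw [Finset.mem_filter] at he ⊢
  exact ⟨Finset.mem_sdiff.mpr ⟨hsub e he.1, fun h => hD e h he.1⟩, he.2⟩

section Utility

variable {M : Finset (Sym2 (Fin 4))} {p : Fin 4 → Fin 4 → ℝ}

lemma Timg (hz : ∀ i j : Fin 4, s(i,j) ∉ M → p i j = 0) (i : Fin 4) {t : ℝ} (ht : 0 < t) :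
    ((univ.filter (fun j => G11.Adj i j ∧ t ≤ p i j)).image (fun j => s(i,j))).card
        = (univ.filter (fun j => G11.Adj i j ∧ t ≤ p i j)).card ∧
      (univ.filter (fun j => G11.Adj i j ∧ t ≤ p i j)).image (fun j => s(i,j))
        ⊆ M.filter (fun e => i ∈ e) := by
  constructor
  · apply Finset.card_image_of_injOn
    intro a _ b _ hab
    exact Sym2.congr_right.mp hab
  · intro e he
    rw [Finset.mem_image] at he
    obtain ⟨j, hj, rfl⟩ := he
    rw [Finset.mem_filter] at hj
    obtain ⟨-, -, hle⟩ := hj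
    have hm : s(i,j) ∈ M := by
      by_contra hnm
      rw [hz i j hnm] at hle
      linarith
    rw [Finset.mem_filter]
    exact ⟨hm, Sym2.mem_mk_left i j⟩

lemma pnonneg (hpay : ∀ i j : Fin 4, s(i, j) ∈ M →
      0 ≤ p i j ∧ 0 ≤ p j i ∧ p i j + p j i = (fun _ => (1:ℝ)) s(i, j))
    (hz : ∀ i j : Fin 4, s(i,j) ∉ M → p i j = 0) (i j : Fin 4) : 0 ≤ p i j := by
  by_cases h : s(i,j) ∈ M
  · exact (hpay i j h).1
  · rw [hz i j h]

lemma pone (hpay : ∀ i j : Fin 4, s(i, j) ∈ M →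
      0 ≤ p i j ∧ 0 ≤ p j i ∧ p i j + p j i = (fun _ => (1:ℝ)) s(i, j))
    (hz : ∀ i j : Fin 4, s(i,j) ∉ M → p i j = 0) (i j : Fin 4) : p i j ≤ 1 := by
  by_cases h : s(i,j) ∈ M
  · have h1 := (hpay i j h).2.1
    have h2 : p i j + p j i = 1 := (hpay i j h).2.2
    linarith
  · rw [hz i j h]; norm_num

lemma degb : ∀ i : Fin 4, b11 i ≤ (univ.filter (fun j => G11.Adj i j)).card := by
  have h : ∀ i : Fin 4, (univ.filter (fun j => G11.Adj i j))
      = (univ.filter (fun j => s(i,j) ∈ E5)) :=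
    fun i => Finset.filter_congr (fun j _ => hAdj i j)
  intro i
  rw [h i]
  revert i; decide

lemma u_nonneg (hpay : ∀ i j : Fin 4, s(i, j) ∈ M →
      0 ≤ p i j ∧ 0 ≤ p j i ∧ p i j + p j i = (fun _ => (1:ℝ)) s(i, j))
    (hz : ∀ i j : Fin 4, s(i,j) ∉ M → p i j = 0) (i : Fin 4) :
    0 ≤ utility G11 b11 p i := by
  rw [utility]
  apply le_csSup
  · refine ⟨1, fun t ht => ?_⟩
    have hb : 1 ≤ b11 i := by fin_cases i <;> decide
    have ht' : b11 i ≤ (univ.filter (fun j => G11.Adj i j ∧ t ≤ p i j)).card := ht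
    have hpos : 0 < (univ.filter (fun j => G11.Adj i j ∧ t ≤ p i j)).card := by omega
    obtain ⟨j, hj⟩ := Finset.card_pos.mp hpos
    rw [Finset.mem_filter] at hj
    exact le_trans hj.2.2 (pone hpay hz i j)
  · show b11 i ≤ _
    have : (univ.filter (fun j => G11.Adj i j ∧ (0:ℝ) ≤ p i j))
        = (univ.filter (fun j => G11.Adj i j)) :=
      Finset.filter_congr (fun j _ => by simp [pnonneg hpay hz i j])
    rw [this]
    exact degb i

lemma u_le (hcap : ∀ i : Fin 4, (M.filter (fun e => i ∈ e)).card ≤ b11 i)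
    (hpay : ∀ i j : Fin 4, s(i, j) ∈ M →
      0 ≤ p i j ∧ 0 ≤ p j i ∧ p i j + p j i = (fun _ => (1:ℝ)) s(i, j))
    (hz : ∀ i j : Fin 4, s(i,j) ∉ M → p i j = 0) {i j : Fin 4} (hij : s(i,j) ∈ M) :
    utility G11 b11 p i ≤ p i j := by
  rw [utility]
  apply Real.sSup_le _ (pnonneg hpay hz i j)
  intro t ht
  by_contra hlt
  push_neg at hlt
  have ht0 : 0 < t := lt_of_le_of_lt (pnonneg hpay hz i j) hlt
  obtain ⟨hcard, hsub⟩ := Timg hz i ht0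
  have hjm : s(i,j) ∉ (univ.filter (fun j' => G11.Adj i j' ∧ t ≤ p i j')).image
      (fun j' => s(i,j')) := by
    intro hmem
    rw [Finset.mem_image] at hmem
    obtain ⟨j', hj', heq⟩ := hmem
    rw [Finset.mem_filter] at hj'
    have : j' = j := Sym2.congr_right.mp heq
    subst this
    linarith [hj'.2.2]
  have h1 : b11 i + 1 ≤ (M.filter (fun e => i ∈ e)).card := by
    have hins : insert s(i,j) ((univ.filter (fun j' => G11.Adj i j' ∧ t ≤ p i j')).image
        (fun j' => s(i,j'))) ⊆ M.filter (fun e => i ∈ e) := by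
      apply Finset.insert_subset _ hsub
      rw [Finset.mem_filter]
      exact ⟨hij, Sym2.mem_mk_left i j⟩
    have := Finset.card_le_card hins
    rw [Finset.card_insert_of_notMem hjm, hcard] at this
    have ht' : b11 i ≤ (univ.filter (fun j' => G11.Adj i j' ∧ t ≤ p i j')).card := ht
    omega
  have := hcap i
  omega

lemma u_zero (hpay : ∀ i j : Fin 4, s(i, j) ∈ M →
      0 ≤ p i j ∧ 0 ≤ p j i ∧ p i j + p j i = (fun _ => (1:ℝ)) s(i, j))
    (hz : ∀ i j : Fin 4, s(i,j) ∉ M → p i j = 0) {i : Fin 4}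
    (hlt : (M.filter (fun e => i ∈ e)).card < b11 i) :
    utility G11 b11 p i = 0 := by
  refine le_antisymm ?_ (u_nonneg hpay hz i)
  rw [utility]
  apply Real.sSup_le _ le_rfl
  intro t ht
  by_contra hlt'
  push_neg at hlt'
  obtain ⟨hcard, hsub⟩ := Timg hz i hlt'
  have := Finset.card_le_card hsub
  rw [hcard] at this
  have ht' : b11 i ≤ (univ.filter (fun j => G11.Adj i j ∧ t ≤ p i j)).card := ht
  omega

end Utility

lemma nostable : ¬ ∃ (M : Finset (Sym2 (Fin 4))) (p : Fin 4 → Fin 4 → ℝ),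
    IsBStable G11 b11 (fun _ => (1 : ℝ)) M p := by
  rintro ⟨M, p, ⟨⟨hbm, hpay, hz⟩, hstab⟩⟩
  obtain ⟨hE, hcap⟩ := hbm
  have hsub : ∀ e ∈ M, e ∈ E5 := fun e he => (hedge e).mp (hE e he)
  set u : Fin 4 → ℝ := utility G11 b11 p with hu
  have hu0 : ∀ i, 0 ≤ u i := u_nonneg hpay hz
  have hM2 : ∀ i j : Fin 4, s(i,j) ∈ M → u i + u j ≤ 1 := by
    intro i j h
    have ha := u_le hcap hpay hz h
    have hb := u_le hcap hpay hz (show s(j,i) ∈ M by rwa [Sym2.eq_swap])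
    have hw : p i j + p j i = 1 := (hpay i j h).2.2
    rw [hu]
    linarith
  have hM3 : ∀ i j : Fin 4, s(i,j) ∈ E5 → s(i,j) ∉ M → 1 ≤ u i + u j := by
    intro i j hadj h
    exact hstab i j ((hAdj i j).mpr hadj) h
  have hM4 : ∀ i : Fin 4, (M.filter (fun e => i ∈ e)).card < b11 i → u i = 0 :=
    fun i h => u_zero hpay hz h
  have hb3 : b11 3 = 1 := rfl
  have hb0 : b11 0 = 2 := rfl
  have hb2 : b11 2 = 2 := rfl
  by_cases h03 : s(0,3) ∈ M
  · -- Case B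
    have h23 : s(2,3) ∉ M := by
      intro h23
      have hss : ({s(0,3), s(2,3)} : Finset (Sym2 (Fin 4)))
          ⊆ M.filter (fun e => (3:Fin 4) ∈ e) := by
        intro e he
        simp only [Finset.mem_insert, Finset.mem_singleton] at he
        rcases he with rfl | rfl <;> rw [Finset.mem_filter]
        · exact ⟨h03, by decide⟩
        · exact ⟨h23, by decide⟩
      have hc := Finset.card_le_card hss
      rw [(by decide : ({s(0,3), s(2,3)} : Finset (Sym2 (Fin 4))).card = 2)] at hc
      have := hcap 3
      omega
    have st23 : 1 ≤ u 2 + u 3 := hM3 2 3 (by decide) h23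
    have le03 : u 0 + u 3 ≤ 1 := hM2 0 3 h03
    by_cases h02 : s(0,2) ∈ M
    · by_cases h12 : s(1,2) ∈ M
      · have h01 : s(0,1) ∉ M := by
          intro h01
          have hss : ({s(0,1), s(0,2), s(0,3)} : Finset (Sym2 (Fin 4)))
              ⊆ M.filter (fun e => (0:Fin 4) ∈ e) := by
            intro e he
            simp only [Finset.mem_insert, Finset.mem_singleton] at he
            rcases he with rfl | rfl | rfl <;> rw [Finset.mem_filter]
            · exact ⟨h01, by decide⟩
            · exact ⟨h02, by decide⟩
            · exact ⟨h03, by decide⟩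
          have hc := Finset.card_le_card hss
          rw [(by decide : ({s(0,1), s(0,2), s(0,3)} : Finset (Sym2 (Fin 4))).card = 3)] at hc
          have := hcap 0
          omega
        have st01 : 1 ≤ u 0 + u 1 := hM3 0 1 (by decide) h01
        have hu1 : u 1 = 0 := hM4 1 (lt_of_le_of_lt
          (deg_bound hsub 1 {s(0,1)} (by intro e he; rw [Finset.mem_singleton] at he; subst he; exact h01))
          (by decide))
        have le02 : u 0 + u 2 ≤ 1 := hM2 0 2 h02
        linarith [hu0 3, hu0 2]
      · have hu2 : u 2 = 0 := hM4 2 (lt_of_le_of_lt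
          (deg_bound hsub 2 {s(1,2), s(2,3)} (by
            intro e he
            simp only [Finset.mem_insert, Finset.mem_singleton] at he
            rcases he with rfl | rfl
            exacts [h12, h23]))
          (by decide))
        have st12 : 1 ≤ u 1 + u 2 := hM3 1 2 (by decide) h12
        have hu1 : u 1 = 0 := hM4 1 (lt_of_le_of_lt
          (deg_bound hsub 1 {s(1,2)} (by intro e he; rw [Finset.mem_singleton] at he; subst he; exact h12))
          (by decide))
        linarith
    · have hu2 : u 2 = 0 := hM4 2 (lt_of_le_of_lt
        (deg_bound hsub 2 {s(0,2), s(2,3)} (by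
          intro e he
          simp only [Finset.mem_insert, Finset.mem_singleton] at he
          rcases he with rfl | rfl
          exacts [h02, h23]))
        (by decide))
      have st02 : 1 ≤ u 0 + u 2 := hM3 0 2 (by decide) h02
      linarith [hu0 3, hu0 0]
  · by_cases h23 : s(2,3) ∈ M
    · -- Case C
      have st03 : 1 ≤ u 0 + u 3 := hM3 0 3 (by decide) h03
      have le23 : u 2 + u 3 ≤ 1 := hM2 2 3 h23
      by_cases h01 : s(0,1) ∈ M
      · by_cases h02 : s(0,2) ∈ M
        · have h12 : s(1,2) ∉ M := by
            intro h12
            have hss : ({s(0,2), s(1,2), s(2,3)} : Finset (Sym2 (Fin 4)))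
                ⊆ M.filter (fun e => (2:Fin 4) ∈ e) := by
              intro e he
              simp only [Finset.mem_insert, Finset.mem_singleton] at he
              rcases he with rfl | rfl | rfl <;> rw [Finset.mem_filter]
              · exact ⟨h02, by decide⟩
              · exact ⟨h12, by decide⟩
              · exact ⟨h23, by decide⟩
            have hc := Finset.card_le_card hss
            rw [(by decide : ({s(0,2), s(1,2), s(2,3)} : Finset (Sym2 (Fin 4))).card = 3)] at hc
            have := hcap 2
            omega
          have st12 : 1 ≤ u 1 + u 2 := hM3 1 2 (by decide) h12
          have hu1 : u 1 = 0 := hM4 1 (lt_of_le_of_lt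
            (deg_bound hsub 1 {s(1,2)} (by intro e he; rw [Finset.mem_singleton] at he; subst he; exact h12))
            (by decide))
          have le02 : u 0 + u 2 ≤ 1 := hM2 0 2 h02
          linarith [hu0 3]
        · have hu0' : u 0 = 0 := hM4 0 (lt_of_le_of_lt
            (deg_bound hsub 0 {s(0,2), s(0,3)} (by
              intro e he
              simp only [Finset.mem_insert, Finset.mem_singleton] at he
              rcases he with rfl | rfl
              exacts [h02, h03]))
            (by decide))
          have st02 : 1 ≤ u 0 + u 2 := hM3 0 2 (by decide) h02
          linarith [hu0 2]
      · have hu0' : u 0 = 0 := hM4 0 (lt_of_le_of_lt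
          (deg_bound hsub 0 {s(0,1), s(0,3)} (by
            intro e he
            simp only [Finset.mem_insert, Finset.mem_singleton] at he
            rcases he with rfl | rfl
            exacts [h01, h03]))
          (by decide))
        have st01 : 1 ≤ u 0 + u 1 := hM3 0 1 (by decide) h01
        have hu1 : u 1 = 0 := hM4 1 (lt_of_le_of_lt
          (deg_bound hsub 1 {s(0,1)} (by intro e he; rw [Finset.mem_singleton] at he; subst he; exact h01))
          (by decide))
        linarith
    · -- Case A
      have hu3 : u 3 = 0 := hM4 3 (lt_of_le_of_lt
        (deg_bound hsub 3 {s(0,3), s(2,3)} (by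
          intro e he
          simp only [Finset.mem_insert, Finset.mem_singleton] at he
          rcases he with rfl | rfl
          exacts [h03, h23]))
        (by decide))
      have st03 : 1 ≤ u 0 + u 3 := hM3 0 3 (by decide) h03
      have st23 : 1 ≤ u 2 + u 3 := hM3 2 3 (by decide) h23
      by_cases h02 : s(0,2) ∈ M
      · have le02 : u 0 + u 2 ≤ 1 := hM2 0 2 h02
        linarith
      · have hu0' : u 0 = 0 := hM4 0 (lt_of_le_of_lt
          (deg_bound hsub 0 {s(0,2), s(0,3)} (by
            intro e he
            simp only [Finset.mem_insert, Finset.mem_singleton] at he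
            rcases he with rfl | rfl
            exacts [h02, h03]))
          (by decide))
        linarith

/-- for the uniform `b`-matching game on the graph with vertex set
`{1,2,3,4}`, edges `{12, 13, 14, 23, 34}` and capacities `b = (2,2,2,1)`: the grand
coalition has value `3`, the vector `(1,1,1,0)` is a core allocation, the maximum
weight of a half-`b`-matching equals `7/2 > 3`, and the corresponding instance of
Stable Fixtures with Payments has no stable solution. -/
theorem statement11 :
    bVal G11 b11 (fun _ => (1 : ℝ)) Finset.univ = 3 ∧
    InCore (bVal G11 b11 (fun _ => (1 : ℝ))) ![1, 1, 1, 0] ∧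
    sSup {t | ∃ f : Sym2 (Fin 4) → ℝ,
        IsHalfBMatching G11 b11 f ∧ t = fWeight (fun _ => (1 : ℝ)) f} = 7 / 2 ∧
    (3 : ℝ) < 7 / 2 ∧
    ¬ ∃ (M : Finset (Sym2 (Fin 4))) (p : Fin 4 → Fin 4 → ℝ),
        IsBStable G11 b11 (fun _ => (1 : ℝ)) M p := by
  refine ⟨bVal_univ, ⟨?_, bVal_le_s11⟩, ?_, by norm_num, ?_⟩
  · rw [bVal_univ]
    norm_num [Fin.sum_univ_four, Matrix.cons_val_two, Matrix.cons_val_three]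
  · exact le_antisymm (Real.sSup_le half_le (by norm_num)) (le_csSup ⟨7/2, half_le⟩ half_mem)
  · exact nostable


end MatchingGames
end

section
/- Every matching game has a non-empty 2/3-approximate core: for every matching game (N,v) on a finite simple graph G with positive edge weights w, there exists a vector x ∈ ℝ^N with x_i ≥ 0 for all i, x(N) = v(N), and x(S) ≥ (2/3)·v(S) for every S ⊆ N. -/
open scoped Classical
open Finset

namespace MatchingGames

variable {V : Type*}

section Basic

variable [Fintype V] {G : SimpleGraph V} {w : Sym2 V → ℝ} {S : Finset V}

lemma bddAbove_matchSet (G : SimpleGraph V) (w : Sym2 V → ℝ) (S : Finset V) :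
    BddAbove {t | ∃ M : Finset (Sym2 V), IsMatching G M ∧ EdgesIn S M ∧ t = mWeight w M} := by
  apply Set.Finite.bddAbove
  apply Set.Finite.subset (Set.finite_range (fun M : Finset (Sym2 V) => mWeight w M))
  rintro t ⟨M, -, -, rfl⟩
  exact ⟨M, rfl⟩

lemma zero_mem_matchSet (G : SimpleGraph V) (w : Sym2 V → ℝ) (S : Finset V) :
    (0 : ℝ) ∈ {t | ∃ M : Finset (Sym2 V), IsMatching G M ∧ EdgesIn S M ∧ t = mWeight w M} := by
  refine ⟨∅, ⟨by simp, by simp⟩, by simp [EdgesIn], by simp [mWeight]⟩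

lemma matchVal_nonneg (G : SimpleGraph V) (w : Sym2 V → ℝ) (S : Finset V) :
    0 ≤ matchVal G w S :=
  le_csSup (bddAbove_matchSet G w S) (zero_mem_matchSet G w S)

lemma le_matchVal {M : Finset (Sym2 V)} (hM : IsMatching G M) (hMS : EdgesIn S M) :
    mWeight w M ≤ matchVal G w S :=
  le_csSup (bddAbove_matchSet G w S) ⟨M, hM, hMS, rfl⟩

lemma matchVal_le {b : ℝ}
    (hb : ∀ M : Finset (Sym2 V), IsMatching G M → EdgesIn S M → mWeight w M ≤ b) :
    matchVal G w S ≤ b := by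
  apply csSup_le ⟨0, zero_mem_matchSet G w S⟩
  rintro t ⟨M, hM, hMS, rfl⟩
  exact hb M hM hMS

end Basic

section Dual
variable [Fintype V] {G : SimpleGraph V} {w : Sym2 V → ℝ}

lemma matching_subset {M M' : Finset (Sym2 V)} (h : IsMatching G M) (hsub : M' ⊆ M) :
    IsMatching G M' :=
  ⟨fun e he => h.1 e (hsub he), fun e he f hf hef v hv => h.2 e (hsub he) f (hsub hf) hef v hv⟩

lemma weak_duality_aux {Y : V → ℝ} (hY0 : ∀ i, 0 ≤ Y i)
    (hYc : ∀ u v : V, G.Adj u v → w s(u, v) ≤ Y u + Y v) :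
    ∀ (n : ℕ) (M : Finset (Sym2 V)) (S : Finset V), M.card ≤ n → IsMatching G M →
      EdgesIn S M → mWeight w M ≤ ∑ i ∈ S, Y i := by
  intro n
  induction n with
  | zero =>
    intro M S hcard _ _
    have : M = ∅ := Finset.card_eq_zero.mp (Nat.le_zero.mp hcard)
    subst this
    simpa [mWeight] using Finset.sum_nonneg (fun i _ => hY0 i)
  | succ n ih =>
    intro M S hcard hM hMS
    rcases Finset.eq_empty_or_nonempty M with rfl | ⟨e, he⟩
    · simpa [mWeight] using Finset.sum_nonneg (fun i _ => hY0 i)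
    · obtain ⟨⟨u, v⟩, rfl⟩ : ∃ p : V × V, s(p.1, p.2) = e :=
        Sym2.ind (fun a b => ⟨(a, b), rfl⟩) e
      have hadj : G.Adj u v := (SimpleGraph.mem_edgeSet G).mp (hM.1 _ he)
      have hne : u ≠ v := G.ne_of_adj hadj
      have hu : u ∈ S := hMS _ he u (Sym2.mem_mk_left u v)
      have hv : v ∈ S := hMS _ he v (Sym2.mem_mk_right u v)
      set M' := M.erase s(u, v) with hM'def
      have hM' : IsMatching G M' := matching_subset hM (Finset.erase_subset _ _)
      have hcard' : M'.card ≤ n := by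
        have hc2 : M'.card = M.card - 1 := by rw [hM'def]; exact Finset.card_erase_of_mem he
        omega
      have hMS' : EdgesIn (S \ {u, v}) M' := by
        intro f hf x hx
        have hfM : f ∈ M := Finset.mem_of_mem_erase hf
        have hfe : f ≠ s(u, v) := Finset.ne_of_mem_erase hf
        have hxS : x ∈ S := hMS f hfM x hx
        have hxf : x ∉ s(u, v) := by
          intro hxe
          exact hM.2 _ he f hfM (Ne.symm hfe) x hxe hx
        rw [Finset.mem_sdiff]
        refine ⟨hxS, ?_⟩
        simp only [Finset.mem_insert, Finset.mem_singleton]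
        rintro (rfl | rfl)
        · exact hxf (Sym2.mem_mk_left _ _)
        · exact hxf (Sym2.mem_mk_right _ _)
      have hsub : {u, v} ⊆ S := by
        intro x hx
        simp only [Finset.mem_insert, Finset.mem_singleton] at hx
        rcases hx with rfl | rfl <;> assumption
      have hsplit : ∑ i ∈ S \ {u, v}, Y i + ∑ i ∈ ({u, v} : Finset V), Y i = ∑ i ∈ S, Y i :=
        Finset.sum_sdiff hsub
      have hpair : ∑ i ∈ ({u, v} : Finset V), Y i = Y u + Y v := Finset.sum_pair hne
      have hwM : mWeight w M = w s(u, v) + mWeight w M' := by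
        rw [hM'def, mWeight, mWeight, Finset.add_sum_erase _ _ he]
      have := ih M' (S \ {u, v}) hcard' hM' hMS'
      have hcov := hYc u v hadj
      rw [hwM, ← hsplit, hpair]
      linarith

lemma matchVal_le_cover {Y : V → ℝ} (hY0 : ∀ i, 0 ≤ Y i)
    (hYc : ∀ u v : V, G.Adj u v → w s(u, v) ≤ Y u + Y v) (S : Finset V) :
    matchVal G w S ≤ ∑ i ∈ S, Y i :=
  matchVal_le (fun M hM hMS => weak_duality_aux hY0 hYc M.card M S le_rfl hM hMS)

lemma perm_bound_aux (σ : Equiv.Perm V) (W : V → V → ℝ)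
    (hW0 : ∀ i j, 0 ≤ W i j)
    (hWadj : ∀ i j, W i j ≠ 0 → G.Adj i j)
    (hWw : ∀ i j, G.Adj i j → W i j = w s(i, j)) :
    ∀ (n : ℕ) (P : Finset V), P.card ≤ n →
      ∃ M : Finset (Sym2 V), IsMatching G M ∧
        (∀ e ∈ M, ∀ x, x ∈ e → (x ∈ P ∨ ∃ i ∈ P, σ i = x)) ∧
        ∑ i ∈ P, W i (σ i) ≤ 3 * mWeight w M := by
  intro n
  induction n with
  | zero =>
    intro P hP
    have : P = ∅ := Finset.card_eq_zero.mp (Nat.le_zero.mp hP)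
    subst this
    exact ⟨∅, ⟨by simp, by simp⟩, by simp, by simp [mWeight]⟩
  | succ n ih =>
    intro P hP
    by_cases h0 : ∀ i ∈ P, W i (σ i) = 0
    · refine ⟨∅, ⟨by simp, by simp⟩, by simp, ?_⟩
      rw [Finset.sum_eq_zero h0]
      simp [mWeight]
    · push_neg at h0
      obtain ⟨i1, hi1P, hi1⟩ := h0
      obtain ⟨i0, hi0P, hmax⟩ := Finset.exists_max_image P (fun i => W i (σ i)) ⟨i1, hi1P⟩
      have hw0pos : 0 < W i0 (σ i0) :=
        lt_of_lt_of_le (lt_of_le_of_ne (hW0 i1 (σ i1)) (Ne.symm hi1)) (hmax i1 hi1P)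
      have hadj : G.Adj i0 (σ i0) := hWadj _ _ (ne_of_gt hw0pos)
      set D : Finset V := {i0, σ i0, σ.symm i0} with hD
      have hDcard : D.card ≤ 3 := by
        apply le_trans (Finset.card_insert_le _ _)
        have := Finset.card_insert_le (σ i0) ({σ.symm i0} : Finset V)
        simp only [Finset.card_singleton] at this ⊢
        omega
      set P' := P \ D with hP'
      have hsubP : P' ⊆ P := Finset.sdiff_subset
      have hcard' : P'.card ≤ n := by
        have h1 : P' ⊆ P.erase i0 := by
          intro x hx
          rw [Finset.mem_erase]
          rw [hP', Finset.mem_sdiff] at hx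
          refine ⟨?_, hx.1⟩
          intro hxx
          exact hx.2 (by rw [hxx, hD]; simp)
        have h2 := Finset.card_le_card h1
        have h3 : (P.erase i0).card = P.card - 1 := Finset.card_erase_of_mem hi0P
        have h4 : 1 ≤ P.card := Finset.card_pos.mpr ⟨i0, hi0P⟩
        omega
      obtain ⟨M', hM'match, hM'verts, hM'sum⟩ := ih P' hcard'
      have hi0notP' : i0 ∉ P' := by rw [hP', Finset.mem_sdiff]; intro h; exact h.2 (by rw [hD]; simp)
      have hsi0notP' : σ i0 ∉ P' := by
        rw [hP', Finset.mem_sdiff]; intro h; exact h.2 (by rw [hD]; simp)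
      have hpre : σ.symm i0 ∉ P' := by
        rw [hP', Finset.mem_sdiff]; intro h; exact h.2 (by rw [hD]; simp)
      have hfree : ∀ x, x ∈ (s(i0, σ i0) : Sym2 V) → ¬(x ∈ P' ∨ ∃ i ∈ P', σ i = x) := by
        intro x hx hcases
        rw [Sym2.mem_iff] at hx
        rcases hx with rfl | rfl
        · rcases hcases with h | ⟨i, hiP', hii⟩
          · exact hi0notP' h
          · have : i = σ.symm x := by
              apply_fun σ.symm at hii; simpa using hii
            exact hpre (this ▸ hiP')
        · rcases hcases with h | ⟨i, hiP', hii⟩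
          · exact hsi0notP' h
          · have : i = i0 := σ.injective hii
            exact hi0notP' (this ▸ hiP')
      have he0M' : s(i0, σ i0) ∉ M' := by
        intro hmem
        exact hfree i0 (Sym2.mem_mk_left _ _) (hM'verts _ hmem i0 (Sym2.mem_mk_left _ _))
      refine ⟨insert s(i0, σ i0) M', ⟨?_, ?_⟩, ?_, ?_⟩
      · intro e he
        rcases Finset.mem_insert.mp he with rfl | he'
        · exact (SimpleGraph.mem_edgeSet G).mpr hadj
        · exact hM'match.1 e he'
      · intro e he f hf hef x hxe hxf
        rcases Finset.mem_insert.mp he with rfl | he' <;>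
          rcases Finset.mem_insert.mp hf with hf0 | hf'
        · exact hef hf0.symm
        · exact hfree x hxe (hM'verts f hf' x hxf)
        · subst hf0
          exact hfree x hxf (hM'verts e he' x hxe)
        · exact hM'match.2 e he' f hf' hef x hxe hxf
      · intro e he x hx
        rcases Finset.mem_insert.mp he with rfl | he'
        · rw [Sym2.mem_iff] at hx
          rcases hx with rfl | rfl
          · exact Or.inl hi0P
          · exact Or.inr ⟨i0, hi0P, rfl⟩
        · rcases hM'verts e he' x hx with h | ⟨i, hiP', hii⟩
          · exact Or.inl (hsubP h)
          · exact Or.inr ⟨i, hsubP hiP', hii⟩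
      · have hsplit : ∑ i ∈ P ∩ D, W i (σ i) + ∑ i ∈ P \ D, W i (σ i) = ∑ i ∈ P, W i (σ i) :=
          Finset.sum_inter_add_sum_sdiff P D _
        have hbound : ∑ i ∈ P ∩ D, W i (σ i) ≤ (P ∩ D).card • W i0 (σ i0) :=
          Finset.sum_le_card_nsmul _ _ _ (fun i hi => hmax i (Finset.mem_inter.mp hi).1)
        have hc3 : ((P ∩ D).card : ℝ) ≤ 3 := by
          have := le_trans (Finset.card_le_card (Finset.inter_subset_right (s₁ := P))) hDcard
          exact_mod_cast this
        have hb2 : ((P ∩ D).card : ℝ) * W i0 (σ i0) ≤ 3 * W i0 (σ i0) :=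
          mul_le_mul_of_nonneg_right hc3 (le_of_lt hw0pos)
        have hwt : mWeight w (insert s(i0, σ i0) M') = w s(i0, σ i0) + mWeight w M' := by
          rw [mWeight, Finset.sum_insert he0M']; rfl
        have hwe : w s(i0, σ i0) = W i0 (σ i0) := (hWw i0 (σ i0) hadj).symm
        rw [hwt, hwe, ← hsplit]
        rw [nsmul_eq_mul] at hbound
        linarith

lemma perm_sum_le_matchVal (σ : Equiv.Perm V) (W : V → V → ℝ)
    (hW0 : ∀ i j, 0 ≤ W i j)
    (hWadj : ∀ i j, W i j ≠ 0 → G.Adj i j)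
    (hWw : ∀ i j, G.Adj i j → W i j = w s(i, j)) :
    ∑ i, W i (σ i) ≤ 3 * matchVal G w Finset.univ := by
  obtain ⟨M, hM, -, hsum⟩ :=
    perm_bound_aux σ W hW0 hWadj hWw (Finset.univ.card) Finset.univ le_rfl
  refine le_trans hsum ?_
  have := le_matchVal (w := w) hM (S := Finset.univ) (fun e _ v _ => Finset.mem_univ v)
  linarith


set_option maxHeartbeats 2000000 in
lemma egervary (W : V → V → ℝ) (hW0 : ∀ i j, 0 ≤ W i j) :
    ∃ (y z : V → ℝ) (σ : Equiv.Perm V),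
      (∀ i, 0 ≤ y i) ∧ (∀ j, 0 ≤ z j) ∧ (∀ i j, W i j ≤ y i + z j) ∧
      (∑ i, y i) + (∑ j, z j) ≤ ∑ i, W i (σ i) := by
  set C : ℝ := ∑ i, ∑ j, W i j with hCdef
  have hC0 : 0 ≤ C := Finset.sum_nonneg fun i _ => Finset.sum_nonneg fun j _ => hW0 i j
  have hWC : ∀ i j, W i j ≤ C := by
    intro i j
    calc W i j ≤ ∑ j', W i j' :=
          Finset.single_le_sum (fun j' _ => hW0 i j') (Finset.mem_univ j)
      _ ≤ C := Finset.single_le_sum (fun i' _ => Finset.sum_nonneg fun j' _ => hW0 i' j')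
          (Finset.mem_univ i)
  set K : Set ((V → ℝ) × (V → ℝ)) :=
    {p | (∀ i, p.1 i ∈ Set.Icc 0 C) ∧ (∀ j, p.2 j ∈ Set.Icc 0 C) ∧
      ∀ i j, W i j ≤ p.1 i + p.2 j} with hKdef
  have hKne : K.Nonempty := by
    refine ⟨(fun _ => C, fun _ => 0), fun i => ⟨hC0, le_rfl⟩, fun j => ⟨le_rfl, hC0⟩, ?_⟩
    intro i j
    simpa using hWC i j
  have hKcl : IsClosed K := by
    have h1 : IsClosed {p : (V → ℝ) × (V → ℝ) | ∀ i, p.1 i ∈ Set.Icc 0 C} := by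
      have : {p : (V → ℝ) × (V → ℝ) | ∀ i, p.1 i ∈ Set.Icc 0 C} =
          ⋂ i, (fun p : (V → ℝ) × (V → ℝ) => p.1 i) ⁻¹' Set.Icc 0 C := by
        ext p; simp
      rw [this]
      exact isClosed_iInter fun i =>
        IsClosed.preimage ((continuous_apply i).comp continuous_fst) isClosed_Icc
    have h2 : IsClosed {p : (V → ℝ) × (V → ℝ) | ∀ j, p.2 j ∈ Set.Icc 0 C} := by
      have : {p : (V → ℝ) × (V → ℝ) | ∀ j, p.2 j ∈ Set.Icc 0 C} =
          ⋂ j, (fun p : (V → ℝ) × (V → ℝ) => p.2 j) ⁻¹' Set.Icc 0 C := by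
        ext p; simp
      rw [this]
      exact isClosed_iInter fun j =>
        IsClosed.preimage ((continuous_apply j).comp continuous_snd) isClosed_Icc
    have h3 : IsClosed {p : (V → ℝ) × (V → ℝ) | ∀ i j, W i j ≤ p.1 i + p.2 j} := by
      have : {p : (V → ℝ) × (V → ℝ) | ∀ i j, W i j ≤ p.1 i + p.2 j} =
          ⋂ i, ⋂ j, {p : (V → ℝ) × (V → ℝ) | W i j ≤ p.1 i + p.2 j} := by
        ext p; simp
      rw [this]
      refine isClosed_iInter fun i => isClosed_iInter fun j => ?_
      exact isClosed_le continuous_const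
        (((continuous_apply i).comp continuous_fst).add
          ((continuous_apply j).comp continuous_snd))
    have : K = {p : (V → ℝ) × (V → ℝ) | ∀ i, p.1 i ∈ Set.Icc 0 C} ∩
        ({p | ∀ j, p.2 j ∈ Set.Icc 0 C} ∩ {p | ∀ i j, W i j ≤ p.1 i + p.2 j}) := by
      ext p
      constructor
      · rintro ⟨a, b, c⟩; exact ⟨a, b, c⟩
      · rintro ⟨a, b, c⟩; exact ⟨a, b, c⟩
    rw [this]
    exact h1.inter (h2.inter h3)
  have hKcp : IsCompact K := by
    have hbox : IsCompact ((Set.univ.pi fun _ : V => Set.Icc (0:ℝ) C) ×ˢ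
        (Set.univ.pi fun _ : V => Set.Icc (0:ℝ) C)) :=
      (isCompact_univ_pi fun _ => isCompact_Icc).prod (isCompact_univ_pi fun _ => isCompact_Icc)
    apply hbox.of_isClosed_subset hKcl
    rintro ⟨py, pz⟩ ⟨h1, h2, -⟩
    exact ⟨fun i _ => h1 i, fun j _ => h2 j⟩
  have hfc : Continuous (fun p : (V → ℝ) × (V → ℝ) => (∑ i, p.1 i) + ∑ j, p.2 j) := by
    apply Continuous.add
    · exact continuous_finset_sum _ fun i _ => (continuous_apply i).comp continuous_fst
    · exact continuous_finset_sum _ fun j _ => (continuous_apply j).comp continuous_snd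
  obtain ⟨p, hpK, hpmin⟩ := hKcp.exists_isMinOn hKne hfc.continuousOn
  obtain ⟨hy, hz, hcov⟩ := hpK
  set y := p.1 with hydef
  set z := p.2 with hzdef
  have key : ∀ y' z' : V → ℝ, (∀ i, 0 ≤ y' i) → (∀ j, 0 ≤ z' j) →
      (∀ i j, W i j ≤ y' i + z' j) →
      (∑ i, y i) + (∑ j, z j) ≤ (∑ i, y' i) + (∑ j, z' j) := by
    intro y' z' h1 h2 h3
    have hmem : ((fun i => min (y' i) C, fun j => min (z' j) C) :
        (V → ℝ) × (V → ℝ)) ∈ K := by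
      refine ⟨fun i => ⟨le_min (h1 i) hC0, min_le_right _ _⟩,
        fun j => ⟨le_min (h2 j) hC0, min_le_right _ _⟩, ?_⟩
      intro i j
      show W i j ≤ min (y' i) C + min (z' j) C
      rcases le_total (y' i) C with hyi | hyi
      · rcases le_total (z' j) C with hzj | hzj
        · rw [min_eq_left hyi, min_eq_left hzj]; exact h3 i j
        · rw [min_eq_right hzj]
          have := hWC i j
          have := h1 i
          have hmin : min (y' i) C = y' i := min_eq_left hyi
          rw [hmin]; linarith
      · rw [min_eq_right hyi]
        have := hWC i j
        have hz2 : 0 ≤ min (z' j) C := le_min (h2 j) hC0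
        linarith
    have := isMinOn_iff.mp hpmin _ hmem
    refine le_trans this ?_
    gcongr with i _ j _
    · exact min_le_left _ _
    · exact min_le_left _ _
  classical
  set R : V → V → Prop := fun i j => (y i + z j ≤ W i j) ∨ (y i = 0 ∧ z j = 0) with hRdef
  set t : V → Finset V := fun i => Finset.univ.filter (fun j => R i j) with htdef
  by_cases hHall : ∀ A : Finset V, A.card ≤ (A.biUnion t).card
  · obtain ⟨g, hginj, hgmem⟩ := (Finset.all_card_le_biUnion_card_iff_exists_injective t).mp hHall
    have hgbij : Function.Bijective g := Finite.injective_iff_bijective.mp hginj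
    refine ⟨y, z, Equiv.ofBijective g hgbij, fun i => (hy i).1, fun j => (hz j).1, hcov, ?_⟩
    have hsplit2 : (∑ i, y i) + (∑ j, z j) = ∑ i, (y i + z (g i)) := by
      rw [Finset.sum_add_distrib,
        Fintype.sum_bijective g hgbij (fun i => z (g i)) z (fun i => rfl)]
    rw [hsplit2]
    apply Finset.sum_le_sum
    intro i _
    have hmem := hgmem i
    rw [htdef] at hmem
    simp only [Finset.mem_filter] at hmem
    have hR : (y i + z (g i) ≤ W i (g i)) ∨ (y i = 0 ∧ z (g i) = 0) := hmem.2
    show y i + z (g i) ≤ W i (g i)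
    rcases hR with h | ⟨h1, h2⟩
    · exact h
    · rw [h1, h2]; simpa using hW0 i (g i)
  · exfalso
    push_neg at hHall
    obtain ⟨A, hA⟩ := hHall
    set N := A.biUnion t with hNdef
    have hAne : A.Nonempty := Finset.card_pos.mp (lt_of_le_of_lt (Nat.zero_le _) hA)
    have hnotR : ∀ i ∈ A, ∀ j, j ∉ N → ¬ R i j := by
      intro i hi j hj hR
      exact hj (Finset.mem_biUnion.mpr ⟨i, hi, Finset.mem_filter.mpr ⟨Finset.mem_univ _, hR⟩⟩)
    have hslack : ∀ i ∈ A, ∀ j, j ∉ N → W i j < y i + z j := by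
      intro i hi j hj
      have hn := hnotR i hi j hj
      by_contra hle
      push_neg at hle
      exact hn (Or.inl hle)
    have hnotzero : ∀ i ∈ A, ∀ j, j ∉ N → ¬(y i = 0 ∧ z j = 0) :=
      fun i hi j hj hzz => hnotR i hi j hj (Or.inr hzz)
    have hNcard : N.card < A.card := hA
    have hBne : (Finset.univ \ N).Nonempty := by
      have h1 : N.card < Finset.univ.card := lt_of_lt_of_le hA (Finset.card_le_univ A)
      have h2 : (Finset.univ \ N).card = Finset.univ.card - N.card :=
        Finset.card_sdiff_of_subset (Finset.subset_univ N)
      rw [← Finset.card_pos, h2]; omega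
    by_cases hApos : ∀ i ∈ A, 0 < y i
    · have hQne : (A ×ˢ (Finset.univ \ N)).Nonempty := hAne.product hBne
      set ε : ℝ := min (A.inf' hAne y)
        ((A ×ˢ (Finset.univ \ N)).inf' hQne (fun q => y q.1 + z q.2 - W q.1 q.2)) with hεdef
      have hεpos : 0 < ε := by
        rw [hεdef, lt_min_iff]
        constructor
        · rw [Finset.lt_inf'_iff]; exact hApos
        · rw [Finset.lt_inf'_iff]
          rintro ⟨i, j⟩ hq
          rw [Finset.mem_product] at hq
          have hjN : j ∉ N := (Finset.mem_sdiff.mp hq.2).2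
          have := hslack i hq.1 j hjN
          show (0:ℝ) < y i + z j - W i j
          linarith
      have hεy : ∀ i ∈ A, ε ≤ y i := fun i hi =>
        le_trans (min_le_left _ _) (Finset.inf'_le _ hi)
      have hεs : ∀ i ∈ A, ∀ j, j ∉ N → ε ≤ y i + z j - W i j := by
        intro i hi j hj
        have hmemq : (i, j) ∈ A ×ˢ (Finset.univ \ N) := by
          rw [Finset.mem_product]
          exact ⟨hi, Finset.mem_sdiff.mpr ⟨Finset.mem_univ _, hj⟩⟩
        exact le_trans (min_le_right _ _)
          (Finset.inf'_le (f := fun q : V × V => y q.1 + z q.2 - W q.1 q.2) hmemq)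
      have h1 : ∀ i, 0 ≤ y i - (if i ∈ A then ε else 0) := by
        intro i
        by_cases hiA : i ∈ A
        · rw [if_pos hiA]; linarith [hεy i hiA]
        · rw [if_neg hiA]; simpa using (hy i).1
      have h2 : ∀ j, 0 ≤ z j + (if j ∈ N then ε else 0) := by
        intro j
        split <;> linarith [(hz j).1, hεpos.le]
      have h3 : ∀ i j, W i j ≤ (y i - (if i ∈ A then ε else 0)) +
          (z j + (if j ∈ N then ε else 0)) := by
        intro i j
        by_cases hiA : i ∈ A
        · by_cases hjN : j ∈ N
          · rw [if_pos hiA, if_pos hjN]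
            have := hcov i j; linarith
          · rw [if_pos hiA, if_neg hjN]
            have := hεs i hiA j hjN; linarith
        · rw [if_neg hiA]
          have := hcov i j
          split <;> linarith [hεpos.le]
      have hkey := key (fun i => y i - (if i ∈ A then ε else 0))
        (fun j => z j + (if j ∈ N then ε else 0)) h1 h2 h3
      have hsy : ∑ i, (y i - (if i ∈ A then ε else 0)) = (∑ i, y i) - A.card * ε := by
        rw [Finset.sum_sub_distrib]
        congr 1
        rw [Finset.sum_ite_mem, Finset.univ_inter, Finset.sum_const, nsmul_eq_mul]
      have hsz : ∑ j, (z j + (if j ∈ N then ε else 0)) = (∑ j, z j) + N.card * ε := by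
        rw [Finset.sum_add_distrib]
        congr 1
        rw [Finset.sum_ite_mem, Finset.univ_inter, Finset.sum_const, nsmul_eq_mul]
      have hcast : (N.card : ℝ) < A.card := by exact_mod_cast hNcard
      rw [hsy, hsz] at hkey
      nlinarith [hεpos, hcast]
    · push_neg at hApos
      obtain ⟨i1, hi1A, hi1y⟩ := hApos
      have hy1 : y i1 = 0 := le_antisymm hi1y (hy i1).1
      have hzpos : ∀ j ∈ Finset.univ \ N, 0 < z j := by
        intro j hj
        have hjN : j ∉ N := (Finset.mem_sdiff.mp hj).2
        have hnz := hnotzero i1 hi1A j hjN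
        have hz0 : z j ≠ 0 := fun h => hnz ⟨hy1, h⟩
        exact lt_of_le_of_ne (hz j).1 (Ne.symm hz0)
      set NB := Finset.univ.filter (fun i => ∃ j ∈ Finset.univ \ N, R i j) with hNBdef
      have hNBmem : ∀ i, i ∈ NB ↔ ∃ j ∈ Finset.univ \ N, R i j := by
        intro i
        rw [hNBdef]
        simp only [Finset.mem_filter, Finset.mem_univ, true_and]
      have hNBsub : NB ⊆ Finset.univ \ A := by
        intro i hi
        rw [hNBmem] at hi
        obtain ⟨j, hj, hR⟩ := hi
        rw [Finset.mem_sdiff]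
        refine ⟨Finset.mem_univ _, fun hiA => ?_⟩
        exact hnotR i hiA j (Finset.mem_sdiff.mp hj).2 hR
      have hcards : NB.card < (Finset.univ \ N).card := by
        have h1 := Finset.card_le_card hNBsub
        rw [Finset.card_sdiff_of_subset (Finset.subset_univ A)] at h1
        have h2 : (Finset.univ \ N).card = Finset.univ.card - N.card :=
          Finset.card_sdiff_of_subset (Finset.subset_univ N)
        have h3 : A.card ≤ Finset.univ.card := Finset.card_le_univ A
        omega
      have hNBcne : (Finset.univ \ NB).Nonempty := by
        have h1 : (Finset.univ \ N).card ≤ Finset.univ.card := Finset.card_le_univ _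
        have h2 : (Finset.univ \ NB).card = Finset.univ.card - NB.card :=
          Finset.card_sdiff_of_subset (Finset.subset_univ NB)
        rw [← Finset.card_pos, h2]; omega
      have hnotR2 : ∀ i, i ∉ NB → ∀ j ∈ Finset.univ \ N, ¬ R i j := by
        intro i hi j hj hR
        exact hi ((hNBmem i).mpr ⟨j, hj, hR⟩)
      have hslack2 : ∀ i, i ∉ NB → ∀ j ∈ Finset.univ \ N, W i j < y i + z j := by
        intro i hi j hj
        have hn := hnotR2 i hi j hj
        by_contra hle
        push_neg at hle
        exact hn (Or.inl hle)
      have hQne : ((Finset.univ \ NB) ×ˢ (Finset.univ \ N)).Nonempty := hNBcne.product hBne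
      set ε : ℝ := min ((Finset.univ \ N).inf' hBne z)
        (((Finset.univ \ NB) ×ˢ (Finset.univ \ N)).inf' hQne
          (fun q => y q.1 + z q.2 - W q.1 q.2)) with hεdef
      have hεpos : 0 < ε := by
        rw [hεdef, lt_min_iff]
        constructor
        · rw [Finset.lt_inf'_iff]; exact hzpos
        · rw [Finset.lt_inf'_iff]
          rintro ⟨i, j⟩ hq
          rw [Finset.mem_product] at hq
          have := hslack2 i (Finset.mem_sdiff.mp hq.1).2 j hq.2
          show (0:ℝ) < y i + z j - W i j
          linarith
      have hεz : ∀ j ∈ Finset.univ \ N, ε ≤ z j := fun j hj =>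
        le_trans (min_le_left _ _) (Finset.inf'_le _ hj)
      have hεs : ∀ i, i ∉ NB → ∀ j ∈ Finset.univ \ N, ε ≤ y i + z j - W i j := by
        intro i hi j hj
        have hmemq : (i, j) ∈ (Finset.univ \ NB) ×ˢ (Finset.univ \ N) := by
          rw [Finset.mem_product]
          exact ⟨Finset.mem_sdiff.mpr ⟨Finset.mem_univ _, hi⟩, hj⟩
        exact le_trans (min_le_right _ _)
          (Finset.inf'_le (f := fun q : V × V => y q.1 + z q.2 - W q.1 q.2) hmemq)
      have h1 : ∀ i, 0 ≤ y i + (if i ∈ NB then ε else 0) := by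
        intro i
        split <;> linarith [(hy i).1, hεpos.le]
      have h2 : ∀ j, 0 ≤ z j - (if j ∈ Finset.univ \ N then ε else 0) := by
        intro j
        by_cases hjB : j ∈ Finset.univ \ N
        · rw [if_pos hjB]; linarith [hεz j hjB]
        · rw [if_neg hjB]; simpa using (hz j).1
      have h3 : ∀ i j, W i j ≤ (y i + (if i ∈ NB then ε else 0)) +
          (z j - (if j ∈ Finset.univ \ N then ε else 0)) := by
        intro i j
        by_cases hjB : j ∈ Finset.univ \ N
        · by_cases hiN : i ∈ NB
          · rw [if_pos hiN, if_pos hjB]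
            have := hcov i j; linarith
          · rw [if_neg hiN, if_pos hjB]
            have := hεs i hiN j hjB; linarith
        · rw [if_neg hjB]
          have := hcov i j
          split <;> linarith [hεpos.le]
      have hkey := key (fun i => y i + (if i ∈ NB then ε else 0))
        (fun j => z j - (if j ∈ Finset.univ \ N then ε else 0)) h1 h2 h3
      have hsy : ∑ i, (y i + (if i ∈ NB then ε else 0)) = (∑ i, y i) + NB.card * ε := by
        rw [Finset.sum_add_distrib]
        congr 1
        rw [Finset.sum_ite_mem, Finset.univ_inter, Finset.sum_const, nsmul_eq_mul]
      have hsz : ∑ j, (z j - (if j ∈ Finset.univ \ N then ε else 0)) =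
          (∑ j, z j) - (Finset.univ \ N).card * ε := by
        rw [Finset.sum_sub_distrib]
        congr 1
        rw [Finset.sum_ite_mem, Finset.univ_inter, Finset.sum_const, nsmul_eq_mul]
      have hcast : (NB.card : ℝ) < (Finset.univ \ N).card := by exact_mod_cast hcards
      rw [hsy, hsz] at hkey
      nlinarith [hεpos, hcast]


lemma exists_good_cover (G : SimpleGraph V) (w : Sym2 V → ℝ)
    (hw : ∀ e ∈ G.edgeSet, 0 < w e) :
    ∃ Y : V → ℝ, (∀ i, 0 ≤ Y i) ∧ (∀ u v : V, G.Adj u v → w s(u, v) ≤ Y u + Y v) ∧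
      (∑ i, Y i) ≤ (3 / 2) * matchVal G w Finset.univ := by
  classical
  set W : V → V → ℝ := fun i j => if G.Adj i j then w s(i, j) else 0 with hWdef
  have hWval : ∀ i j, W i j = if G.Adj i j then w s(i, j) else 0 := fun i j => rfl
  have hW0 : ∀ i j, 0 ≤ W i j := by
    intro i j
    rw [hWval]
    split
    · next h => exact (hw _ ((SimpleGraph.mem_edgeSet G).mpr h)).le
    · exact le_rfl
  have hWadj : ∀ i j, W i j ≠ 0 → G.Adj i j := by
    intro i j h
    by_contra hadj
    exact h (by rw [hWval, if_neg hadj])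
  have hWw : ∀ i j, G.Adj i j → W i j = w s(i, j) := by
    intro i j h
    rw [hWval, if_pos h]
  obtain ⟨y, z, σ, hy0, hz0, hcov, hsum⟩ := egervary W hW0
  have hperm := perm_sum_le_matchVal (G := G) (w := w) σ W hW0 hWadj hWw
  refine ⟨fun u => (y u + z u) / 2, fun u => by have := hy0 u; have := hz0 u; positivity, ?_, ?_⟩
  · intro u v hadj
    have h1 : W u v ≤ y u + z v := hcov u v
    have h2 : W v u ≤ y v + z u := hcov v u
    rw [hWw u v hadj] at h1
    rw [hWw v u hadj.symm] at h2
    have e3 : (s(v, u) : Sym2 V) = s(u, v) := Sym2.eq_swap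
    rw [e3] at h2
    linarith
  · have hs : ∑ u, (y u + z u) / 2 = ((∑ u, y u) + ∑ u, z u) / 2 := by
      rw [← Finset.sum_add_distrib, Finset.sum_div]
    rw [hs]
    linarith

end Dual

/-- every matching game has a non-empty `2/3`-approximate core. -/
theorem statement13 [Fintype V] (G : SimpleGraph V) (w : Sym2 V → ℝ)
    (hw : ∀ e ∈ G.edgeSet, 0 < w e) :
    ∃ x : V → ℝ, (∀ i, 0 ≤ x i) ∧ (∑ i, x i) = matchVal G w Finset.univ ∧
      ∀ S : Finset V, (2 / 3) * matchVal G w S ≤ ∑ i ∈ S, x i := by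
  classical
  obtain ⟨Y, hY0, hYc, hYsum⟩ := exists_good_cover G w hw
  have hcovS : ∀ S : Finset V, matchVal G w S ≤ ∑ i ∈ S, Y i := matchVal_le_cover hY0 hYc
  have hν0 : 0 ≤ matchVal G w Finset.univ := matchVal_nonneg G w _
  have hYV : matchVal G w Finset.univ ≤ ∑ i, Y i := hcovS Finset.univ
  by_cases hzero : (∑ i, Y i) = 0
  · have hν : matchVal G w Finset.univ = 0 := le_antisymm (hzero ▸ hYV) hν0
    refine ⟨fun _ => 0, fun i => le_rfl, by simp [hν], ?_⟩
    intro S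
    have h1 : matchVal G w S ≤ ∑ i ∈ S, Y i := hcovS S
    have h2 : ∑ i ∈ S, Y i ≤ ∑ i, Y i :=
      Finset.sum_le_sum_of_subset_of_nonneg (Finset.subset_univ S) (fun i _ _ => hY0 i)
    have h3 : ∑ i ∈ S, (0:ℝ) = 0 := Finset.sum_const_zero
    rw [h3]
    linarith
  · have hpos : 0 < ∑ i, Y i :=
      lt_of_le_of_ne (Finset.sum_nonneg fun i _ => hY0 i) (Ne.symm hzero)
    set c : ℝ := matchVal G w Finset.univ / (∑ i, Y i) with hc
    have hc0 : 0 ≤ c := div_nonneg hν0 hpos.le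
    have hc23 : 2 / 3 ≤ c := by
      rw [hc, le_div_iff₀ hpos]
      linarith
    refine ⟨fun i => c * Y i, fun i => mul_nonneg hc0 (hY0 i), ?_, ?_⟩
    · rw [← Finset.mul_sum, hc, div_mul_cancel₀ _ hzero]
    · intro S
      rw [← Finset.mul_sum]
      have h1 : matchVal G w S ≤ ∑ i ∈ S, Y i := hcovS S
      have h2 : 0 ≤ matchVal G w S := matchVal_nonneg G w S
      calc (2 / 3) * matchVal G w S ≤ c * matchVal G w S := by nlinarith
        _ ≤ c * ∑ i ∈ S, Y i := by nlinarith


end MatchingGames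
end
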